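/- arXiv:2603.29884 — 2 statements merged into one kernel-verified Lean document; each statement's English description precedes it below -/
import Mathlib

section
/- Let X be an extended-real-valued random variable and φ a proper convex function on ℝ (extended to ±∞ by its limits). Assume that X and φ(X) are both quasi-integrable. Then φ(E[X]) ≤ E[φ(X)]. Moreover, if X is integrable and φ is strictly convex at E[X], then φ(E[X]) = E[φ(X)] if and only if X = E[X] almost surely. -/
open MeasureTheory ProbabilityTheory Filter Set Topology
open scoped ENNReal NNReal

noncomputable section

/-- Extended-real positive part, as a value in `ℝ≥0∞`. -/
def EReal.toENNReal' (x : EReal) : ℝ≥0∞ :=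
  if x = ⊤ then ⊤ else ENNReal.ofReal x.toReal

/-- Quasi-integrability of an extended-real-valued function: the positive part or the negative
part has finite integral. -/
def QuasiIntegrable {Ω : Type*} [MeasurableSpace Ω] (μ : Measure Ω) (g : Ω → EReal) : Prop :=
  (∫⁻ ω, (g ω).toENNReal' ∂μ) < ⊤ ∨ (∫⁻ ω, (-(g ω)).toENNReal' ∂μ) < ⊤

/-- The integral (expectation) of an extended-real-valued function, defined as the difference
of the integrals of the positive and negative parts. -/
def eInt {Ω : Type*} [MeasurableSpace Ω] (μ : Measure Ω) (g : Ω → EReal) : EReal :=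
  ((∫⁻ ω, (g ω).toENNReal' ∂μ : ℝ≥0∞) : EReal) - ((∫⁻ ω, (-(g ω)).toENNReal' ∂μ : ℝ≥0∞) : EReal)

/-- `φ` is a proper convex function on `ℝ` with values in `(-∞, +∞]`. -/
structure ProperConvex (φ : ℝ → EReal) : Prop where
  ne_bot : ∀ x, φ x ≠ ⊥
  exists_finite : ∃ x, φ x ≠ ⊤
  convex : ∀ x y α : ℝ, 0 ≤ α → α ≤ 1 →
    φ (α * x + (1 - α) * y) ≤ (α : EReal) * φ x + ((1 - α : ℝ) : EReal) * φ y

/-- `φ` is strictly convex at the point `z`. -/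
def StrictConvexAt (φ : ℝ → EReal) (z : ℝ) : Prop :=
  ∀ x y α : ℝ, x ≠ z → y ≠ z → 0 < α → α < 1 → z = α * x + (1 - α) * y →
    φ z < (α : EReal) * φ x + ((1 - α : ℝ) : EReal) * φ y

namespace JensenAux

@[simp] lemma tE_top : (⊤ : EReal).toENNReal' = ⊤ := by simp [EReal.toENNReal']

@[simp] lemma tE_bot : (⊥ : EReal).toENNReal' = 0 := by
  simp [EReal.toENNReal']

@[simp] lemma tE_coe (x : ℝ) : ((x : EReal)).toENNReal' = ENNReal.ofReal x := by
  simp [EReal.toENNReal']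

lemma tE_mono : Monotone EReal.toENNReal' := by
  intro x y hxy
  unfold EReal.toENNReal'
  by_cases hy : y = ⊤
  · simp [hy]
  · have hx : x ≠ ⊤ := fun h => hy (top_le_iff.mp (h ▸ hxy))
    simp only [hx, hy, if_false]
    by_cases hxb : x = ⊥
    · simp only [hxb, EReal.toReal_bot, ENNReal.ofReal_zero]
      exact zero_le
    · exact ENNReal.ofReal_le_ofReal (EReal.toReal_le_toReal hxy hxb hy)

lemma tE_eq_top_iff {x : EReal} : x.toENNReal' = ⊤ ↔ x = ⊤ := by
  unfold EReal.toENNReal'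
  split
  · simpa
  · simp_all [ENNReal.ofReal_ne_top]

lemma tE_meas : Measurable EReal.toENNReal' := by
  unfold EReal.toENNReal'
  apply Measurable.ite
  · exact measurableSet_eq
  · exact measurable_const
  · exact ENNReal.measurable_ofReal.comp measurable_ereal_toReal

lemma coe_ennreal_real {p : ℝ≥0∞} (hp : p ≠ ⊤) : (p : EReal) = ((p.toReal : ℝ) : EReal) := by
  conv_lhs => rw [← ENNReal.ofReal_toReal hp]
  rw [EReal.coe_ennreal_ofReal, max_eq_left ENNReal.toReal_nonneg]

lemma eInt_congr {Ω : Type*} [MeasurableSpace Ω] {μ : Measure Ω} {g g' : Ω → EReal}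
    (h : g =ᵐ[μ] g') : eInt μ g = eInt μ g' := by
  have h1 : (fun ω => (g ω).toENNReal') =ᵐ[μ] fun ω => (g' ω).toENNReal' :=
    h.mono fun ω hω => by simp only [hω]
  have h2 : (fun ω => (-(g ω)).toENNReal') =ᵐ[μ] fun ω => (-(g' ω)).toENNReal' :=
    h.mono fun ω hω => by simp only [hω]
  unfold eInt
  rw [lintegral_congr_ae h1, lintegral_congr_ae h2]

lemma eInt_eq_top {Ω : Type*} [MeasurableSpace Ω] {μ : Measure Ω} {g : Ω → EReal}
    (hp : ∫⁻ ω, (g ω).toENNReal' ∂μ = ⊤) (hm : ∫⁻ ω, (-(g ω)).toENNReal' ∂μ ≠ ⊤) :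
    eInt μ g = ⊤ := by
  unfold eInt
  rw [hp, EReal.coe_ennreal_top, sub_eq_add_neg]
  apply EReal.top_add_of_ne_bot
  intro hbot
  rw [EReal.neg_eq_bot_iff] at hbot
  exact hm (EReal.coe_ennreal_eq_top_iff.mp hbot)

lemma eInt_eq_bot {Ω : Type*} [MeasurableSpace Ω] {μ : Measure Ω} {g : Ω → EReal}
    (hm : ∫⁻ ω, (-(g ω)).toENNReal' ∂μ = ⊤) : eInt μ g = ⊥ := by
  unfold eInt
  rw [hm, EReal.coe_ennreal_top, EReal.sub_top]

lemma eInt_const {Ω : Type*} [MeasurableSpace Ω] (μ : Measure Ω) [IsProbabilityMeasure μ]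
    {c : EReal} (hc : c ≠ ⊥) : eInt μ (fun _ => c) = c := by
  unfold eInt
  rw [lintegral_const, lintegral_const, measure_univ, mul_one, mul_one]
  induction c with
  | bot => exact absurd rfl hc
  | coe r =>
      rw [tE_coe]
      have : -((r : ℝ) : EReal) = ((-r : ℝ) : EReal) := by rw [EReal.coe_neg]
      rw [this, tE_coe, EReal.coe_ennreal_ofReal, EReal.coe_ennreal_ofReal]
      rcases le_total 0 r with h | h
      · rw [max_eq_left h, max_eq_right (by linarith)]
        norm_num
      · rw [max_eq_right h, max_eq_left (by linarith)]
        rw [← EReal.coe_sub]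
        norm_num
  | top =>
      rw [tE_top, EReal.neg_top, tE_bot, EReal.coe_ennreal_top]
      simp

lemma tE_pos_real : ∀ (x : EReal), x ≠ ⊤ → ENNReal.ofReal x.toReal = x.toENNReal' := by
  intro x
  induction x with
  | bot => intro _; simp
  | coe r => intro _; rw [tE_coe]; simp
  | top => intro h; exact absurd rfl h

lemma tE_neg_real : ∀ (x : EReal), x ≠ ⊥ → ENNReal.ofReal (-(x.toReal)) = (-x).toENNReal' := by
  intro x
  induction x with
  | bot => intro h; exact absurd rfl h
  | coe r =>
      intro _
      rw [show -((r : ℝ) : EReal) = ((-r : ℝ) : EReal) from (EReal.coe_neg _).symm, tE_coe]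
      simp
  | top => intro _; rw [EReal.neg_top, tE_bot]; simp

lemma tE_abs : ∀ (x : EReal), ENNReal.ofReal |x.toReal| ≤ x.toENNReal' + (-x).toENNReal' := by
  intro x
  induction x with
  | bot => simp
  | coe r =>
      rw [tE_coe, show -((r : ℝ) : EReal) = ((-r : ℝ) : EReal) from (EReal.coe_neg _).symm, tE_coe]
      simp only [EReal.toReal_coe]
      rcases le_total 0 r with h | h
      · rw [abs_of_nonneg h]; exact le_self_add
      · rw [abs_of_nonpos h]; exact le_add_self
  | top => simp

lemma eInt_eq_integral {Ω : Type*} [MeasurableSpace Ω] {μ : Measure Ω} {g : Ω → EReal}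
    (hg : Measurable g)
    (hp : ∫⁻ ω, (g ω).toENNReal' ∂μ ≠ ⊤) (hm : ∫⁻ ω, (-(g ω)).toENNReal' ∂μ ≠ ⊤) :
    Integrable (fun ω => (g ω).toReal) μ ∧ (∀ᵐ ω ∂μ, g ω = (((g ω).toReal : ℝ) : EReal)) ∧
      eInt μ g = ((∫ ω, (g ω).toReal ∂μ : ℝ) : EReal) := by
  have hmeas : Measurable fun ω => (g ω).toENNReal' := tE_meas.comp hg
  have hmeasn : Measurable fun ω => (-(g ω)).toENNReal' := tE_meas.comp hg.neg
  have hnt : ∀ᵐ ω ∂μ, g ω ≠ ⊤ := by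
    filter_upwards [ae_lt_top hmeas hp] with ω hω
    exact fun h => by simp [h] at hω
  have hnb : ∀ᵐ ω ∂μ, g ω ≠ ⊥ := by
    filter_upwards [ae_lt_top hmeasn hm] with ω hω
    intro h
    simp [h] at hω
  have hreal : ∀ᵐ ω ∂μ, g ω = (((g ω).toReal : ℝ) : EReal) := by
    filter_upwards [hnt, hnb] with ω h1 h2
    exact (EReal.coe_toReal h1 h2).symm
  -- identify the positive/negative parts with `ofReal`
  have hpos : (fun ω => ENNReal.ofReal ((g ω).toReal)) =ᵐ[μ] fun ω => (g ω).toENNReal' := by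
    filter_upwards [hnt] with ω h1
    exact tE_pos_real _ h1
  have hneg : (fun ω => ENNReal.ofReal (-(g ω).toReal)) =ᵐ[μ] fun ω => (-(g ω)).toENNReal' := by
    filter_upwards [hnb] with ω h2
    exact tE_neg_real _ h2
  have hint : Integrable (fun ω => (g ω).toReal) μ := by
    refine ⟨(measurable_ereal_toReal.comp hg).aestronglyMeasurable, ?_⟩
    rw [hasFiniteIntegral_iff_norm]
    calc ∫⁻ ω, ENNReal.ofReal ‖(g ω).toReal‖ ∂μ
        ≤ ∫⁻ ω, ((g ω).toENNReal' + (-(g ω)).toENNReal') ∂μ := by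
          apply lintegral_mono
          intro ω
          simp only [Real.norm_eq_abs]
          exact tE_abs (g ω)
      _ = (∫⁻ ω, (g ω).toENNReal' ∂μ) + ∫⁻ ω, (-(g ω)).toENNReal' ∂μ :=
          lintegral_add_left hmeas _
      _ < ⊤ := by
          rw [ENNReal.add_lt_top]
          exact ⟨hp.lt_top, hm.lt_top⟩
  refine ⟨hint, hreal, ?_⟩
  have hbo := integral_eq_lintegral_pos_part_sub_lintegral_neg_part hint
  rw [lintegral_congr_ae hpos, lintegral_congr_ae hneg] at hbo
  unfold eInt
  rw [coe_ennreal_real hp, coe_ennreal_real hm, ← EReal.coe_sub, hbo]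

lemma convex_le_max {φ : ℝ → EReal} (hφ : ProperConvex φ) :
    ∀ x y z : ℝ, x ≤ y → y ≤ z → φ y ≤ max (φ x) (φ z) := by
  intro x y z hxy hyz
  by_cases hM : max (φ x) (φ z) = ⊤
  · rw [hM]; exact le_top
  have hxt : φ x ≠ ⊤ := fun hh => hM (eq_top_iff.mpr (hh ▸ le_max_left (φ x) (φ z)))
  have hzt : φ z ≠ ⊤ := fun hh => hM (eq_top_iff.mpr (hh ▸ le_max_right (φ x) (φ z)))
  rcases eq_or_lt_of_le (hxy.trans hyz) with heq | hlt
  · have hyx : y = x := le_antisymm (heq ▸ hyz) hxy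
    rw [hyx]; exact le_max_left _ _
  · set α : ℝ := (z - y)/(z - x) with hα
    have hzx : (0:ℝ) < z - x := by linarith
    have h0 : 0 ≤ α := div_nonneg (by linarith) hzx.le
    have h1 : α ≤ 1 := by rw [hα, div_le_one hzx]; linarith
    have hcomb : α * x + (1 - α) * z = y := by rw [hα]; field_simp; ring
    have hconv := hφ.convex x z α h0 h1
    rw [hcomb] at hconv
    refine hconv.trans ?_
    rw [← EReal.coe_toReal hxt (hφ.ne_bot x), ← EReal.coe_toReal hzt (hφ.ne_bot z),
      ← EReal.coe_mul, ← EReal.coe_mul, ← EReal.coe_add]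
    rcases le_total ((φ x).toReal) ((φ z).toReal) with hc | hc
    · exact le_trans (EReal.coe_le_coe_iff.mpr (by nlinarith)) (le_max_right _ _)
    · exact le_trans (EReal.coe_le_coe_iff.mpr (by nlinarith)) (le_max_left _ _)

lemma measurable_of_properConvex {φ : ℝ → EReal} (hφ : ProperConvex φ) : Measurable φ := by
  classical
  have key := convex_le_max hφ
  set S : Set ℝ := {x | ∃ y, x < y ∧ φ y < φ x} with hS
  have hlow : ∀ {w x : ℝ}, w ≤ x → x ∈ S → (w ∈ S ∧ φ x ≤ φ w) := by
    intro w x hwx hx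
    obtain ⟨y, hxy, hy⟩ := hx
    rcases eq_or_lt_of_le hwx with rfl | hwx'
    · exact ⟨⟨y, hxy, hy⟩, le_refl _⟩
    · have hfxw : φ x ≤ φ w := by
        by_contra hcon
        push_neg at hcon
        have hk := key w x y hwx'.le hxy.le
        have hmax : max (φ w) (φ y) < φ x := max_lt hcon hy
        exact absurd hk (not_le.mpr hmax)
      exact ⟨⟨y, hwx'.trans hxy, lt_of_lt_of_le hy hfxw⟩, hfxw⟩
  have hSlower : IsLowerSet S := fun x w hwx hx => (hlow hwx hx).1
  have hSmeas : MeasurableSet S :=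
    Set.OrdConnected.measurableSet ⟨fun _x _hx z hz y hy => hSlower hy.2 hz⟩
  set g : ℝ → EReal := fun x => if x ∈ S then φ x else ⊥ with hg
  set h2f : ℝ → EReal := fun x => if x ∈ S then ⊥ else φ x with hh
  have hganti : Antitone g := by
    intro x y hxy
    by_cases hy : y ∈ S
    · have h2 := hlow hxy hy
      simp only [hg, if_pos hy, if_pos h2.1]
      exact h2.2
    · simp only [hg, if_neg hy]; exact bot_le
  have hhmono : Monotone h2f := by
    intro x y hxy
    by_cases hx : x ∈ S
    · simp only [hh, if_pos hx]; exact bot_le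
    · have hy : y ∉ S := fun hy => hx (hSlower hxy hy)
      simp only [hh, if_neg hx, if_neg hy]
      by_contra hcon
      push_neg at hcon
      rcases eq_or_lt_of_le hxy with rfl | h'
      · exact absurd hcon (lt_irrefl _)
      · exact hx ⟨y, h', hcon⟩
  have hpw : φ = S.piecewise g h2f := by
    funext x; by_cases hx : x ∈ S <;> simp [Set.piecewise, hx, hg, hh]
  rw [hpw]
  exact Measurable.piecewise hSmeas hganti.measurable hhmono.measurable

lemma combo_coe (α : ℝ) {a b : EReal} (ha : a ≠ ⊤) (hb : b ≠ ⊤) (na : a ≠ ⊥) (nb : b ≠ ⊥) :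
    (α : EReal) * a + ((1 - α : ℝ) : EReal) * b
      = ((α * a.toReal + (1 - α) * b.toReal : ℝ) : EReal) := by
  conv_lhs => rw [← EReal.coe_toReal ha na, ← EReal.coe_toReal hb nb]
  rw [← EReal.coe_mul, ← EReal.coe_mul, ← EReal.coe_add]

lemma slope3 {φ : ℝ → EReal} (hφ : ProperConvex φ) {u w z : ℝ}
    (h1 : u < w) (h2 : w < z) (hu : φ u ≠ ⊤) (hw : φ w ≠ ⊤) (hz : φ z ≠ ⊤) :
    ((φ w).toReal - (φ u).toReal) / (w - u) ≤ ((φ z).toReal - (φ w).toReal) / (z - w) := by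
  have hzu : (0:ℝ) < z - u := by linarith
  set α : ℝ := (z - w)/(z - u) with hα
  have h0 : 0 ≤ α := div_nonneg (by linarith) hzu.le
  have h1' : α ≤ 1 := by rw [hα, div_le_one hzu]; linarith
  have hcomb : α * u + (1 - α) * z = w := by rw [hα]; field_simp; ring
  have hconv := hφ.convex u z α h0 h1'
  rw [hcomb, combo_coe α hu hz (hφ.ne_bot u) (hφ.ne_bot z),
    ← EReal.coe_toReal hw (hφ.ne_bot w), EReal.coe_le_coe_iff] at hconv
  have e1 : α * (z - u) = z - w := by rw [hα]; field_simp
  have e2 : (1 - α) * (z - u) = w - u := by rw [hα]; field_simp; ring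
  have h6 : (φ w).toReal * (z - u)
      ≤ (z - w) * (φ u).toReal + (w - u) * (φ z).toReal := by
    calc (φ w).toReal * (z - u)
        ≤ (α * (φ u).toReal + (1 - α) * (φ z).toReal) * (z - u) :=
          mul_le_mul_of_nonneg_right hconv hzu.le
      _ = (α * (z - u)) * (φ u).toReal + ((1 - α) * (z - u)) * (φ z).toReal := by ring
      _ = (z - w) * (φ u).toReal + (w - u) * (φ z).toReal := by rw [e1, e2]
  rw [div_le_div_iff₀ (by linarith : (0:ℝ) < w - u) (by linarith : (0:ℝ) < z - w)]
  nlinarith [h6]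

lemma exists_subgradient {φ : ℝ → EReal} (hφ : ProperConvex φ) {m x₁ y₁ : ℝ}
    (hx : x₁ < m) (hy : m < y₁) (hx1 : φ x₁ ≠ ⊤) (hy1 : φ y₁ ≠ ⊤) :
    φ m ≠ ⊤ ∧ ∃ a : ℝ, ∀ x : ℝ,
      (((φ m).toReal + a * (x - m) : ℝ) : EReal) ≤ φ x := by
  have hmt : φ m ≠ ⊤ := by
    have hyx : (0:ℝ) < y₁ - x₁ := by linarith
    set α : ℝ := (y₁ - m)/(y₁ - x₁) with hα
    have h0 : 0 ≤ α := div_nonneg (by linarith) hyx.le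
    have h1' : α ≤ 1 := by rw [hα, div_le_one hyx]; linarith
    have hcomb : α * x₁ + (1 - α) * y₁ = m := by rw [hα]; field_simp; ring
    have hconv := hφ.convex x₁ y₁ α h0 h1'
    rw [hcomb, combo_coe α hx1 hy1 (hφ.ne_bot x₁) (hφ.ne_bot y₁)] at hconv
    exact fun hh => by rw [hh] at hconv; exact (not_lt.mpr hconv) (EReal.coe_lt_top _)
  set A : Set ℝ := (fun x => ((φ m).toReal - (φ x).toReal)/(m - x)) '' {x | x < m ∧ φ x ≠ ⊤}
    with hA
  have hne : A.Nonempty := ⟨_, ⟨x₁, ⟨hx, hx1⟩, rfl⟩⟩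
  have hub : ∀ y, m < y → φ y ≠ ⊤ → ∀ s ∈ A, s ≤ ((φ y).toReal - (φ m).toReal)/(y - m) := by
    rintro y hmy hyt s ⟨x, ⟨hxm, hxt⟩, rfl⟩
    exact slope3 hφ hxm hmy hxt hmt hyt
  have hbdd : BddAbove A := ⟨_, hub y₁ hy hy1⟩
  set a := sSup A with ha
  refine ⟨hmt, a, fun x => ?_⟩
  rcases lt_trichotomy x m with hxm | rfl | hmx
  · by_cases hxt : φ x = ⊤
    · rw [hxt]; exact le_top
    · have hmem : ((φ m).toReal - (φ x).toReal)/(m - x) ≤ a :=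
        le_csSup hbdd ⟨x, ⟨hxm, hxt⟩, rfl⟩
      have hgoal : (φ m).toReal + a * (x - m) ≤ (φ x).toReal := by
        rw [div_le_iff₀ (by linarith : (0:ℝ) < m - x)] at hmem
        nlinarith
      calc (((φ m).toReal + a*(x-m) : ℝ) : EReal)
          ≤ (((φ x).toReal : ℝ) : EReal) := EReal.coe_le_coe_iff.mpr hgoal
        _ = φ x := EReal.coe_toReal hxt (hφ.ne_bot x)
  · have heq : (φ x).toReal + a * (x - x) = (φ x).toReal := by ring
    rw [heq, EReal.coe_toReal hmt (hφ.ne_bot x)]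
  · by_cases hxt : φ x = ⊤
    · rw [hxt]; exact le_top
    · have hmem : a ≤ ((φ x).toReal - (φ m).toReal)/(x - m) := csSup_le hne (hub x hmx hxt)
      have hgoal : (φ m).toReal + a * (x - m) ≤ (φ x).toReal := by
        rw [le_div_iff₀ (by linarith : (0:ℝ) < x - m)] at hmem
        nlinarith
      calc (((φ m).toReal + a*(x-m) : ℝ) : EReal)
          ≤ (((φ x).toReal : ℝ) : EReal) := EReal.coe_le_coe_iff.mpr hgoal
        _ = φ x := EReal.coe_toReal hxt (hφ.ne_bot x)

lemma ereal_sub_le_sub {A B C D : ℝ≥0∞} (hB : B ≠ ⊤) (hC : C ≠ ⊤) (hD : D ≠ ⊤)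
    (h : C + D ≤ A + B) : (C : EReal) - (B : EReal) ≤ (A : EReal) - (D : EReal) := by
  by_cases hA : A = ⊤
  · rw [hA, EReal.coe_ennreal_top, coe_ennreal_real hD, EReal.top_sub_coe]
    exact le_top
  · have hr : C.toReal + D.toReal ≤ A.toReal + B.toReal := by
      rw [← ENNReal.toReal_add hC hD, ← ENNReal.toReal_add hA hB]
      exact ENNReal.toReal_mono (ENNReal.add_ne_top.mpr ⟨hA, hB⟩) h
    rw [coe_ennreal_real hB, coe_ennreal_real hC, coe_ennreal_real hD, coe_ennreal_real hA,
      ← EReal.coe_sub, ← EReal.coe_sub, EReal.coe_le_coe_iff]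
    linarith

lemma ofReal_cross {r s : ℝ} (h : r ≤ s) :
    ENNReal.ofReal r + ENNReal.ofReal (-s) ≤ ENNReal.ofReal s + ENNReal.ofReal (-r) := by
  rcases le_total r 0 with hr | hr
  · rcases le_total s 0 with hs | hs
    · rw [ENNReal.ofReal_of_nonpos hr, ENNReal.ofReal_of_nonpos hs, zero_add, zero_add]
      exact ENNReal.ofReal_le_ofReal (by linarith)
    · rw [ENNReal.ofReal_of_nonpos hr, ENNReal.ofReal_of_nonpos (by linarith : -s ≤ 0),
        zero_add]
      exact zero_le
  · rw [ENNReal.ofReal_of_nonpos (by linarith : -s ≤ 0),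
      ENNReal.ofReal_of_nonpos (by linarith : -r ≤ 0), add_zero, add_zero]
    exact ENNReal.ofReal_le_ofReal h

lemma coe_ofReal_sub (r : ℝ) :
    ((ENNReal.ofReal r : ℝ≥0∞) : EReal) - ((ENNReal.ofReal (-r) : ℝ≥0∞) : EReal)
      = (r : EReal) := by
  rw [EReal.coe_ennreal_ofReal, EReal.coe_ennreal_ofReal, ← EReal.coe_sub]
  rcases le_total 0 r with h | h
  · rw [max_eq_left h, max_eq_right (by linarith)]; norm_num
  · rw [max_eq_right h, max_eq_left (by linarith)]; norm_num

lemma const_le_eInt {Ω : Type*} [MeasurableSpace Ω] (μ : Measure Ω) [IsProbabilityMeasure μ]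
    {g : Ω → EReal} {r : ℝ} (h : ∀ᵐ ω ∂μ, (r : EReal) ≤ g ω) : (r : EReal) ≤ eInt μ g := by
  have hneg : ∀ᵐ ω ∂μ, (-(g ω)).toENNReal' ≤ ENNReal.ofReal (-r) := by
    filter_upwards [h] with ω hω
    calc (-(g ω)).toENNReal' ≤ ((-r : ℝ) : EReal).toENNReal' := by
          apply tE_mono
          rw [EReal.coe_neg]
          exact EReal.neg_le_neg_iff.mpr hω
      _ = ENNReal.ofReal (-r) := tE_coe _
  have hQm : (∫⁻ ω, (-(g ω)).toENNReal' ∂μ) ≠ ⊤ := by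
    refine ((lintegral_mono_ae hneg).trans_lt ?_).ne
    rw [lintegral_const, measure_univ, mul_one]
    exact ENNReal.ofReal_lt_top
  have hpt : ∀ᵐ ω ∂μ, ENNReal.ofReal r + (-(g ω)).toENNReal'
      ≤ (g ω).toENNReal' + ENNReal.ofReal (-r) := by
    filter_upwards [h] with ω hω
    revert hω
    induction g ω with
    | bot => intro hω; exact absurd hω (by simp)
    | coe s =>
        intro hω
        rw [tE_coe, show -((s : ℝ) : EReal) = ((-s : ℝ) : EReal) from (EReal.coe_neg _).symm,
          tE_coe]
        exact ofReal_cross (EReal.coe_le_coe_iff.mp hω)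
    | top =>
        intro _
        rw [tE_top, top_add]
        exact le_top
  have hlin : ENNReal.ofReal r + (∫⁻ ω, (-(g ω)).toENNReal' ∂μ)
      ≤ (∫⁻ ω, (g ω).toENNReal' ∂μ) + ENNReal.ofReal (-r) := by
    have h1 := lintegral_mono_ae hpt
    rw [lintegral_add_left measurable_const, lintegral_add_right _ measurable_const,
      lintegral_const, measure_univ, mul_one, lintegral_const, measure_univ, mul_one] at h1
    exact h1
  calc (r : EReal) = ((ENNReal.ofReal r : ℝ≥0∞) : EReal)
        - ((ENNReal.ofReal (-r) : ℝ≥0∞) : EReal) := (coe_ofReal_sub r).symm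
    _ ≤ _ := ereal_sub_le_sub ENNReal.ofReal_ne_top ENNReal.ofReal_ne_top hQm hlin

lemma exists_mem_ae {Ω : Type*} [MeasurableSpace Ω] {μ : Measure Ω} {A : Set Ω} {p : Ω → Prop}
    (hA : μ A ≠ 0) (hp : ∀ᵐ ω ∂μ, p ω) : ∃ ω, ω ∈ A ∧ p ω := by
  have h0 : μ {ω | ¬ p ω} = 0 := ae_iff.mp hp
  have h1 : μ (A \ {ω | ¬ p ω}) ≠ 0 := by rw [measure_diff_null h0]; exact hA
  obtain ⟨ω, hω⟩ := nonempty_of_measure_ne_zero h1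
  exact ⟨ω, hω.1, not_not.mp hω.2⟩

lemma main_case {Ω : Type*} [MeasurableSpace Ω] (μ : Measure Ω) [IsProbabilityMeasure μ]
    {X : Ω → EReal} (hX : Measurable X) {φ : ℝ → EReal} (hφ : ProperConvex φ)
    {φe : EReal → EReal} (hcoe : ∀ x : ℝ, φe (x : EReal) = φ x)
    (hφeX : Measurable (fun ω => φe (X ω)))
    (hPp : ∫⁻ ω, (X ω).toENNReal' ∂μ ≠ ⊤) (hPm : ∫⁻ ω, (-(X ω)).toENNReal' ∂μ ≠ ⊤)
    (hQp : ∫⁻ ω, (φe (X ω)).toENNReal' ∂μ ≠ ⊤) :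
    φe (eInt μ X) ≤ eInt μ (fun ω => φe (X ω)) ∧
      (StrictConvexAt φ (eInt μ X).toReal →
        (φe (eInt μ X) = eInt μ (fun ω => φe (X ω)) ↔ ∀ᵐ ω ∂μ, X ω = eInt μ X)) := by
  obtain ⟨hYint, hXae, heX⟩ := eInt_eq_integral hX hPp hPm
  set mr : ℝ := ∫ ω, (X ω).toReal ∂μ with hmr
  have heX' : eInt μ X = ((mr : ℝ) : EReal) := heX
  have hmr' : (eInt μ X).toReal = mr := by rw [heX']; exact rfl
  have hφeInt : φe (eInt μ X) = φ mr := by rw [heX']; exact hcoe mr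
  have hφeq : ∀ᵐ ω ∂μ, φe (X ω) = φ ((X ω).toReal) := by
    filter_upwards [hXae] with ω hω
    conv_lhs => rw [hω]
    rw [hcoe]
  have hφnt : ∀ᵐ ω ∂μ, φe (X ω) ≠ ⊤ := by
    filter_upwards [ae_lt_top (tE_meas.comp hφeX) hQp] with ω hω
    exact fun h => by simp [h] at hω
  have hφYnt : ∀ᵐ ω ∂μ, φ ((X ω).toReal) ≠ ⊤ := by
    filter_upwards [hφeq, hφnt] with ω h1 h2
    rw [← h1]; exact h2
  by_cases hconst : ∀ᵐ ω ∂μ, X ω = ((mr : ℝ) : EReal)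
  · have hconst' : (fun ω => φe (X ω)) =ᵐ[μ] fun _ => φ mr := by
      filter_upwards [hconst] with ω hω; rw [hω, hcoe]
    have hE : eInt μ (fun ω => φe (X ω)) = φ mr := by
      rw [eInt_congr hconst', eInt_const μ (hφ.ne_bot mr)]
    refine ⟨le_of_eq (by rw [hφeInt, hE]), fun _ => ?_⟩
    constructor
    · intro _
      rw [heX']; exact hconst
    · intro _
      rw [hφeInt, hE]
  · have hApos : μ {ω | mr < (X ω).toReal} ≠ 0 := by
      intro h0
      apply hconst
      have hset : {ω | ¬ (X ω).toReal ≤ mr} = {ω | mr < (X ω).toReal} := by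
        ext ω; simp [not_le]
      have hle : ∀ᵐ ω ∂μ, (X ω).toReal ≤ mr := by
        rw [ae_iff, hset]; exact h0
      have hint2 : Integrable (fun ω => mr - (X ω).toReal) μ := (integrable_const mr).sub hYint
      have hnn : 0 ≤ᵐ[μ] fun ω => mr - (X ω).toReal :=
        hle.mono fun ω hω => sub_nonneg.mpr hω
      have hzero : ∫ ω, (mr - (X ω).toReal) ∂μ = 0 := by
        rw [integral_sub (integrable_const mr) hYint, integral_const]
        simp [hmr]
      have hz := (integral_eq_zero_iff_of_nonneg_ae hnn hint2).mp hzero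
      filter_upwards [hz, hXae] with ω h1 h2
      have h3 : mr - (X ω).toReal = 0 := h1
      have h4 : (X ω).toReal = mr := by linarith
      rw [h2, h4]
    have hBpos : μ {ω | (X ω).toReal < mr} ≠ 0 := by
      intro h0
      apply hconst
      have hset : {ω | ¬ mr ≤ (X ω).toReal} = {ω | (X ω).toReal < mr} := by
        ext ω; simp [not_le]
      have hle : ∀ᵐ ω ∂μ, mr ≤ (X ω).toReal := by
        rw [ae_iff, hset]; exact h0
      have hint2 : Integrable (fun ω => (X ω).toReal - mr) μ := hYint.sub (integrable_const mr)
      have hnn : 0 ≤ᵐ[μ] fun ω => (X ω).toReal - mr :=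
        hle.mono fun ω hω => sub_nonneg.mpr hω
      have hzero : ∫ ω, ((X ω).toReal - mr) ∂μ = 0 := by
        rw [integral_sub hYint (integrable_const mr), integral_const]
        simp [hmr]
      have hz := (integral_eq_zero_iff_of_nonneg_ae hnn hint2).mp hzero
      filter_upwards [hz, hXae] with ω h1 h2
      have h3 : (X ω).toReal - mr = 0 := h1
      have h4 : (X ω).toReal = mr := by linarith
      rw [h2, h4]
    obtain ⟨ω₁, hω₁A, hω₁⟩ := exists_mem_ae hBpos hφYnt
    obtain ⟨ω₂, hω₂A, hω₂⟩ := exists_mem_ae hApos hφYnt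
    obtain ⟨hmt, a, hline⟩ := exists_subgradient hφ hω₁A hω₂A hω₁ hω₂
    set v : ℝ := (φ mr).toReal with hv
    set L : Ω → ℝ := fun ω => v + a * ((X ω).toReal - mr) with hL
    have hsubint : Integrable (fun ω => (X ω).toReal - mr) μ :=
      hYint.sub (integrable_const mr)
    have hmulint : Integrable (fun ω => a * ((X ω).toReal - mr)) μ := hsubint.const_mul a
    have hLint : Integrable L μ := (integrable_const v).add hmulint
    have hLeq : ∫ ω, L ω ∂μ = v := by
      show ∫ ω, (v + a * ((X ω).toReal - mr)) ∂μ = v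
      rw [integral_add (integrable_const v) hmulint,
        integral_const, integral_const_mul, integral_sub hYint (integrable_const mr),
        integral_const]
      simp [hmr]
    have hge : ∀ᵐ ω ∂μ, L ω ≤ (φe (X ω)).toReal := by
      filter_upwards [hφeq, hφnt] with ω h1 h2
      have hl := hline ((X ω).toReal)
      rw [← h1] at hl
      have := EReal.toReal_le_toReal hl (EReal.coe_ne_bot _) h2
      rwa [EReal.toReal_coe] at this
    have hgecoe : ∀ᵐ ω ∂μ, ((L ω : ℝ) : EReal) ≤ φe (X ω) := by
      filter_upwards [hφeq] with ω h1
      have hl := hline ((X ω).toReal)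
      rw [← h1] at hl
      exact hl
    have hQm : ∫⁻ ω, (-(φe (X ω))).toENNReal' ∂μ ≠ ⊤ := by
      have hbd : ∀ᵐ ω ∂μ, (-(φe (X ω))).toENNReal' ≤ ENNReal.ofReal ‖L ω‖ := by
        filter_upwards [hgecoe] with ω hω
        calc (-(φe (X ω))).toENNReal' ≤ (-(((L ω : ℝ)) : EReal)).toENNReal' :=
              tE_mono (EReal.neg_le_neg_iff.mpr hω)
          _ = ENNReal.ofReal (-(L ω)) := by
              rw [show -((L ω : ℝ) : EReal) = ((-(L ω) : ℝ) : EReal) from (EReal.coe_neg _).symm,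
                tE_coe]
          _ ≤ ENNReal.ofReal ‖L ω‖ := by
              apply ENNReal.ofReal_le_ofReal
              rw [Real.norm_eq_abs]
              exact neg_le_abs _
      have hfin := hLint.hasFiniteIntegral
      rw [hasFiniteIntegral_iff_norm] at hfin
      exact ((lintegral_mono_ae hbd).trans_lt hfin).ne
    obtain ⟨hgint, hgae, hgE⟩ := eInt_eq_integral hφeX hQp hQm
    have hmain : v ≤ ∫ ω, (φe (X ω)).toReal ∂μ := by
      rw [← hLeq]
      exact integral_mono_ae hLint hgint hge
    have hφmr : φ mr = ((v : ℝ) : EReal) := (EReal.coe_toReal hmt (hφ.ne_bot mr)).symm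
    constructor
    · rw [hφeInt, hgE, hφmr]
      exact EReal.coe_le_coe_iff.mpr hmain
    · intro hsc
      have hsc' : StrictConvexAt φ mr := hmr' ▸ hsc
      constructor
      · intro heq
        exfalso
        rw [hφeInt, hgE, hφmr] at heq
        have hveq : v = ∫ ω, (φe (X ω)).toReal ∂μ := EReal.coe_eq_coe_iff.mp heq
        set G : Ω → ℝ := fun ω => (φe (X ω)).toReal - L ω with hG
        have hGint : Integrable (fun ω => (φe (X ω)).toReal - L ω) μ := hgint.sub hLint
        have hGnn : 0 ≤ᵐ[μ] G := hge.mono fun ω h => sub_nonneg.mpr h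
        have hGzero : ∫ ω, G ω ∂μ = 0 := by
          show ∫ ω, ((φe (X ω)).toReal - L ω) ∂μ = 0
          rw [integral_sub hgint hLint, hLeq, ← hveq]
          ring
        have hG0 := (integral_eq_zero_iff_of_nonneg_ae hGnn hGint).mp hGzero
        have hAE : ∀ᵐ ω ∂μ, (φ ((X ω).toReal) ≠ ⊤ ∧ (φ ((X ω).toReal)).toReal = L ω) := by
          filter_upwards [hφYnt, hG0, hφeq] with ω h1 h2 h3
          refine ⟨h1, ?_⟩
          have h4 : (φe (X ω)).toReal - L ω = 0 := h2
          rw [← h3]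
          linarith
        obtain ⟨ω₃, hω₃A, hω₃⟩ := exists_mem_ae hBpos hAE
        obtain ⟨ω₄, hω₄A, hω₄⟩ := exists_mem_ae hApos hAE
        set x₀ : ℝ := (X ω₃).toReal with hx₀
        set y₀ : ℝ := (X ω₄).toReal with hy₀
        have hx0 : x₀ < mr := hω₃A
        have hy0 : mr < y₀ := hω₄A
        have hyx : (0:ℝ) < y₀ - x₀ := by linarith
        set α : ℝ := (y₀ - mr)/(y₀ - x₀) with hα
        have h0 : 0 < α := div_pos (by linarith) hyx
        have h1 : α < 1 := by rw [hα, div_lt_one hyx]; linarith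
        have hcomb : mr = α * x₀ + (1 - α) * y₀ := by rw [hα]; field_simp; ring
        have hlt := hsc' x₀ y₀ α (ne_of_lt hx0) (ne_of_gt hy0) h0 h1 hcomb
        rw [combo_coe α hω₃.1 hω₄.1 (hφ.ne_bot x₀) (hφ.ne_bot y₀)] at hlt
        rw [hω₃.2, hω₄.2] at hlt
        have hsum : α * L ω₃ + (1 - α) * L ω₄ = v := by
          rw [hL]
          simp only
          linear_combination (-(a : ℝ)) * hcomb
        rw [hsum, hφmr] at hlt
        exact lt_irrefl _ hlt
      · intro hae
        have hconst2 : ∀ᵐ ω ∂μ, X ω = ((mr : ℝ) : EReal) := by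
          filter_upwards [hae] with ω h
          rw [h, heX']
        exact absurd hconst2 hconst

lemma top_case {Ω : Type*} [MeasurableSpace Ω] (μ : Measure Ω) [IsProbabilityMeasure μ]
    {X : Ω → EReal} (hX : Measurable X) {φ : ℝ → EReal} (hφ : ProperConvex φ)
    {φe : EReal → EReal} (hcoe : ∀ x : ℝ, φe (x : EReal) = φ x)
    (htop : Tendsto φ atTop (nhds (φe ⊤)))
    (hbot : Tendsto φ atBot (nhds (φe ⊥)))
    (hPtop : ∫⁻ ω, (X ω).toENNReal' ∂μ = ⊤)
    (hQ : QuasiIntegrable μ (fun ω => φe (X ω))) :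
    φe ⊤ ≤ eInt μ (fun ω => φe (X ω)) := by
  by_cases hQp : ∫⁻ ω, (φe (X ω)).toENNReal' ∂μ = ⊤
  · have hQm : ∫⁻ ω, (-(φe (X ω))).toENNReal' ∂μ ≠ ⊤ := by
      rcases hQ with h | h
      · exact absurd hQp h.ne
      · exact h.ne
    rw [eInt_eq_top hQp hQm]
    exact le_top
  by_cases hbcase : φe ⊤ = ⊥
  · rw [hbcase]; exact bot_le
  by_cases ht : φe ⊤ = ⊤
  · exfalso
    by_cases hdom : ∀ d : ℝ, ∃ x, d < x ∧ φ x ≠ ⊤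
    · -- domain unbounded above: find affine minorant with positive slope
      obtain ⟨u, hu⟩ := hφ.exists_finite
      have hray : ∀ x, u ≤ x → φ x ≠ ⊤ := by
        intro x hx
        rcases eq_or_lt_of_le hx with rfl | hux
        · exact hu
        · obtain ⟨y, hxy, hy⟩ := hdom x
          intro htop'
          have hk := convex_le_max hφ u x y hux.le hxy.le
          rw [htop'] at hk
          rcases max_cases (φ u) (φ y) with ⟨h1, _⟩ | ⟨h1, _⟩
          · rw [h1] at hk; exact hu (top_le_iff.mp hk)
          · rw [h1] at hk; exact hy (top_le_iff.mp hk)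
      have hev : ∀ᶠ x in atTop, φ u < φ x := by
        have h1 : φ u < φe ⊤ := by rw [ht]; exact lt_top_iff_ne_top.mpr hu
        exact htop (Ioi_mem_nhds h1)
      obtain ⟨w, hw1, hw2⟩ := (hev.and (eventually_ge_atTop (u+1))).exists
      have huw : u < w := by linarith
      have hwt : φ w ≠ ⊤ := hray w (by linarith)
      have hfuw : (φ u).toReal < (φ w).toReal := by
        rw [← EReal.coe_lt_coe_iff, EReal.coe_toReal hu (hφ.ne_bot u),
          EReal.coe_toReal hwt (hφ.ne_bot w)]
        exact hw1
      set fu : ℝ := (φ u).toReal with hfu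
      set fw : ℝ := (φ w).toReal with hfw
      set s : ℝ := (fw - fu)/(w - u) with hsdef
      have hs : 0 < s := div_pos (by linarith) (by linarith)
      have hlb : ∀ x, w ≤ x → ((fw + s*(x - w) : ℝ) : EReal) ≤ φ x := by
        intro x hx
        rcases eq_or_lt_of_le hx with rfl | hwx
        · have heq2 : fw + s * (w - w) = fw := by ring
          rw [heq2, hfw, EReal.coe_toReal hwt (hφ.ne_bot w)]
        · have hxt : φ x ≠ ⊤ := hray x (by linarith)
          have h3 := slope3 hφ huw hwx hu hwt hxt
          rw [le_div_iff₀ (by linarith : (0:ℝ) < x - w)] at h3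
          have h4 : fw + s * (x - w) ≤ (φ x).toReal := by
            rw [hsdef]
            nlinarith [h3]
          calc ((fw + s*(x - w) : ℝ) : EReal) ≤ (((φ x).toReal : ℝ) : EReal) :=
                EReal.coe_le_coe_iff.mpr h4
            _ = φ x := EReal.coe_toReal hxt (hφ.ne_bot x)
      set b : ℝ := fw - s * w with hbdef
      set T : ℝ := max w ((2 * |b|)/s + 1) with hTdef
      have hTw : w ≤ T := le_max_left _ _
      have hTpos : 0 < T := lt_of_lt_of_le (by positivity) (le_max_right _ _)
      have hlin : ∀ x : ℝ, T ≤ x → ((s/2 * x : ℝ) : EReal) ≤ φ x := by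
        intro x hx
        have hx2 : (2 * |b|)/s + 1 ≤ x := le_trans (le_max_right _ _) hx
        have hb2 : 2 * |b| ≤ s * ((2 * |b|)/s + 1) - s := by
          have hs0 : s ≠ 0 := hs.ne'
          have e : s * ((2 * |b|)/s) = 2 * |b| := by field_simp
          rw [mul_add, e]; linarith
        have hxb : |b| ≤ s * x / 2 := by
          have h5 : (2 * |b|)/s ≤ x := by linarith
          rw [div_le_iff₀ hs] at h5
          nlinarith
        have h6 : s/2 * x ≤ fw + s * (x - w) := by
          have : fw + s * (x - w) = s * x + b := by rw [hbdef]; ring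
          rw [this]
          have hab : -(s*x/2) ≤ b := by
            have := abs_le.mp (le_refl |b|) -- junk
            nlinarith [neg_abs_le b]
          nlinarith
        exact le_trans (EReal.coe_le_coe_iff.mpr h6) (hlb x (le_trans hTw hx))
      set A : Set Ω := {ω | ((T:ℝ) : EReal) ≤ X ω} with hAdef
      have hAmeas : MeasurableSet A := hX measurableSet_Ici
      have hptx : ∀ x : EReal, ((T:ℝ) : EReal) ≤ x →
          ENNReal.ofReal (s/2) * x.toENNReal' ≤ (φe x).toENNReal' := by
        intro x
        induction x with
        | bot => intro h; exact absurd h (by simp)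
        | coe t =>
            intro h
            have hTt : T ≤ t := EReal.coe_le_coe_iff.mp h
            rw [hcoe, tE_coe, ← ENNReal.ofReal_mul (by positivity : (0:ℝ) ≤ s/2)]
            calc ENNReal.ofReal (s/2 * t) = ((s/2 * t : ℝ) : EReal).toENNReal' := (tE_coe _).symm
              _ ≤ (φ t).toENNReal' := tE_mono (hlin t hTt)
        | top =>
            intro _
            rw [ht, tE_top]
            exact le_top
      have hpt : ∀ ω, A.indicator (fun ω' => ENNReal.ofReal (s/2) * (X ω').toENNReal') ω
          ≤ (φe (X ω)).toENNReal' := by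
        intro ω
        by_cases hω : ω ∈ A
        · rw [Set.indicator_of_mem hω]
          exact hptx (X ω) hω
        · rw [Set.indicator_of_notMem hω]
          exact zero_le
      have hAint : ∫⁻ ω in A, (X ω).toENNReal' ∂μ = ⊤ := by
        by_contra hfin
        have hsplit := lintegral_add_compl (fun ω => (X ω).toENNReal') hAmeas (μ := μ)
        have hcompl : ∫⁻ ω in Aᶜ, (X ω).toENNReal' ∂μ ≤ ENNReal.ofReal T := by
          calc ∫⁻ ω in Aᶜ, (X ω).toENNReal' ∂μ
              ≤ ∫⁻ _ in Aᶜ, ENNReal.ofReal T ∂μ := by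
                apply setLIntegral_mono' hAmeas.compl
                intro ω hω
                have hlt : X ω ≤ ((T:ℝ) : EReal) := le_of_not_ge hω
                calc (X ω).toENNReal' ≤ ((T:ℝ) : EReal).toENNReal' := tE_mono hlt
                  _ = ENNReal.ofReal T := tE_coe T
            _ = ENNReal.ofReal T * μ Aᶜ := setLIntegral_const _ _
            _ ≤ ENNReal.ofReal T * 1 := mul_le_mul_right prob_le_one _
            _ = ENNReal.ofReal T := mul_one _
        rw [hPtop] at hsplit
        have : (∫⁻ ω in A, (X ω).toENNReal' ∂μ) + ∫⁻ ω in Aᶜ, (X ω).toENNReal' ∂μ < ⊤ :=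
          ENNReal.add_lt_top.mpr ⟨lt_top_iff_ne_top.mpr hfin,
            hcompl.trans_lt ENNReal.ofReal_lt_top⟩
        rw [hsplit] at this
        exact lt_irrefl _ this
      apply hQp
      rw [eq_top_iff]
      calc (⊤ : ℝ≥0∞) = ENNReal.ofReal (s/2) * ⊤ := by
            rw [ENNReal.mul_top (ENNReal.ofReal_pos.mpr (by positivity : (0:ℝ) < s/2)).ne']
        _ = ENNReal.ofReal (s/2) * ∫⁻ ω in A, (X ω).toENNReal' ∂μ := by rw [hAint]
        _ = ∫⁻ ω in A, ENNReal.ofReal (s/2) * (X ω).toENNReal' ∂μ :=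
            (lintegral_const_mul _ (tE_meas.comp hX)).symm
        _ = ∫⁻ ω, A.indicator (fun ω' => ENNReal.ofReal (s/2) * (X ω').toENNReal') ω ∂μ :=
            (lintegral_indicator hAmeas _).symm
        _ ≤ ∫⁻ ω, (φe (X ω)).toENNReal' ∂μ := lintegral_mono hpt
    · push_neg at hdom
      obtain ⟨d, hd⟩ := hdom
      set A : Set Ω := {ω | ((d:ℝ) : EReal) < X ω} with hAdef
      have hAmeas : MeasurableSet A := hX measurableSet_Ioi
      have hA : μ A ≠ 0 := by
        intro h0
        have hset : {ω | ¬ X ω ≤ ((d:ℝ):EReal)} = A := by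
          ext ω; simp [hAdef, not_le]
        have hle : ∀ᵐ ω ∂μ, X ω ≤ ((d:ℝ):EReal) := by
          rw [ae_iff, hset]; exact h0
        have hfin : ∫⁻ ω, (X ω).toENNReal' ∂μ ≤ ENNReal.ofReal d := by
          calc ∫⁻ ω, (X ω).toENNReal' ∂μ ≤ ∫⁻ _, ENNReal.ofReal d ∂μ := by
                apply lintegral_mono_ae
                filter_upwards [hle] with ω hω
                calc (X ω).toENNReal' ≤ ((d:ℝ):EReal).toENNReal' := tE_mono hω
                  _ = ENNReal.ofReal d := tE_coe d
            _ = ENNReal.ofReal d := by rw [lintegral_const, measure_univ, mul_one]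
        rw [hPtop] at hfin
        exact (hfin.trans_lt ENNReal.ofReal_lt_top).ne rfl
      have hptx : ∀ x : EReal, ((d:ℝ) : EReal) < x → φe x = ⊤ := by
        intro x
        induction x with
        | bot => intro h; exact absurd h (by simp)
        | coe t =>
            intro h
            rw [hcoe]
            exact hd t (EReal.coe_lt_coe_iff.mp h)
        | top => intro _; exact ht
      have hind : ∀ ω, A.indicator (fun _ => (⊤:ℝ≥0∞)) ω ≤ (φe (X ω)).toENNReal' := by
        intro ω
        by_cases hω : ω ∈ A
        · rw [Set.indicator_of_mem hω, hptx (X ω) hω, tE_top]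
        · rw [Set.indicator_of_notMem hω]
          exact zero_le
      apply hQp
      rw [eq_top_iff]
      calc (⊤ : ℝ≥0∞) = ⊤ * μ A := (ENNReal.top_mul hA).symm
        _ = ∫⁻ _ in A, (⊤:ℝ≥0∞) ∂μ := (setLIntegral_const _ _).symm
        _ = ∫⁻ ω, A.indicator (fun _ => (⊤:ℝ≥0∞)) ω ∂μ := (lintegral_indicator hAmeas _).symm
        _ ≤ ∫⁻ ω, (φe (X ω)).toENNReal' ∂μ := lintegral_mono hind
  · -- φe ⊤ = r finite
    have hr : φe ⊤ = (((φe ⊤).toReal : ℝ) : EReal) := (EReal.coe_toReal ht hbcase).symm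
    set r : ℝ := (φe ⊤).toReal with hrdef
    have hallφ : ∀ x : ℝ, ((r:ℝ):EReal) ≤ φ x := by
      intro x
      by_cases hxt : φ x = ⊤
      · rw [hxt]; exact le_top
      have hmono : ∀ t, x ≤ t → φ t ≤ φ x := by
        intro t hxt'
        by_contra hcon
        push_neg at hcon
        have hlt : x < t := by
          rcases eq_or_lt_of_le hxt' with rfl | h
          · exact absurd hcon (lt_irrefl _)
          · exact h
        by_cases htt : φ t = ⊤
        · have hev : ∀ᶠ z in atTop, φ z = ⊤ := by
            filter_upwards [eventually_gt_atTop t] with z hz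
            have hk := convex_le_max hφ x t z hlt.le hz.le
            rw [htt] at hk
            rcases max_cases (φ x) (φ z) with ⟨h1, _⟩ | ⟨h1, _⟩
            · rw [h1] at hk; exact absurd (top_le_iff.mp hk) hxt
            · rw [h1] at hk; exact top_le_iff.mp hk
          have htend : Tendsto φ atTop (nhds ⊤) :=
            Tendsto.congr' (hev.mono fun z hz => hz.symm) tendsto_const_nhds
          exact ht (tendsto_nhds_unique htop htend)
        · have hftx : (φ x).toReal < (φ t).toReal := by
            rw [← EReal.coe_lt_coe_iff, EReal.coe_toReal hxt (hφ.ne_bot x),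
              EReal.coe_toReal htt (hφ.ne_bot t)]
            exact hcon
          set fx : ℝ := (φ x).toReal
          set ft : ℝ := (φ t).toReal
          set s2 : ℝ := (ft - fx)/(t - x) with hs2def
          have hs2 : 0 < s2 := div_pos (by linarith) (by linarith)
          have hlb2 : ∀ z, t < z → ((ft + s2*(z - t) : ℝ) : EReal) ≤ φ z := by
            intro z hz
            by_cases hzt : φ z = ⊤
            · rw [hzt]; exact le_top
            · have h3 := slope3 hφ hlt hz hxt htt hzt
              rw [le_div_iff₀ (by linarith : (0:ℝ) < z - t)] at h3
              have h4 : ft + s2 * (z - t) ≤ (φ z).toReal := by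
                rw [hs2def]; nlinarith [h3]
              calc ((ft + s2*(z - t) : ℝ) : EReal) ≤ (((φ z).toReal : ℝ) : EReal) :=
                    EReal.coe_le_coe_iff.mpr h4
                _ = φ z := EReal.coe_toReal hzt (hφ.ne_bot z)
          have hev1 : ∀ᶠ z in atTop, ((r+1 : ℝ):EReal) ≤ φ z := by
            filter_upwards [eventually_ge_atTop (max (t+1) (t + (r + 1 - ft)/s2))] with z hz
            have hz1 : t < z := lt_of_lt_of_le (by linarith) ((le_max_left _ _).trans hz)
            have hz2 : t + (r + 1 - ft)/s2 ≤ z := (le_max_right _ _).trans hz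
            have hz3 : (r + 1 - ft)/s2 ≤ z - t := by linarith
            rw [div_le_iff₀ hs2] at hz3
            refine le_trans (EReal.coe_le_coe_iff.mpr ?_) (hlb2 z hz1)
            nlinarith [hz3]
          have hev2 : ∀ᶠ z in atTop, φ z < ((r+1:ℝ):EReal) := by
            refine htop (Iio_mem_nhds ?_)
            rw [hr]
            exact EReal.coe_lt_coe_iff.mpr (by linarith)
          obtain ⟨z, h1', h2'⟩ := (hev1.and hev2).exists
          exact absurd (lt_of_le_of_lt h1' h2') (lt_irrefl _)
      have hle := le_of_tendsto htop (eventually_atTop.mpr ⟨x, hmono⟩)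
      rw [hr] at hle
      exact hle
    have hbotge : ((r:ℝ):EReal) ≤ φe ⊥ := ge_of_tendsto hbot (Eventually.of_forall hallφ)
    rw [hr]
    apply const_le_eInt
    apply ae_of_all
    intro ω
    induction X ω with
    | bot => exact hbotge
    | coe t => rw [hcoe]; exact hallφ t
    | top => rw [hr]
  
lemma strictConvexAt_ne_top {φ : ℝ → EReal} {z : ℝ} (hsc : StrictConvexAt φ z) : φ z ≠ ⊤ := by
  intro h
  have hcomb : z = (1/2 : ℝ) * (z - 1) + (1 - (1/2 : ℝ)) * (z + 1) := by ring
  have hlt := hsc (z-1) (z+1) (1/2) (by linarith) (by linarith) (by norm_num) (by norm_num) hcomb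
  rw [h] at hlt
  exact absurd hlt (not_lt.mpr le_top)

lemma measurable_phieX {Ω : Type*} [MeasurableSpace Ω] {X : Ω → EReal} (hX : Measurable X)
    {φ : ℝ → EReal} (hφm : Measurable φ) {φe : EReal → EReal}
    (hcoe : ∀ x : ℝ, φe (x : EReal) = φ x) :
    Measurable (fun ω => φe (X ω)) := by
  classical
  have hfun : (fun ω => φe (X ω)) = fun ω =>
      if X ω = ⊤ then φe ⊤ else if X ω = ⊥ then φe ⊥ else φ ((X ω).toReal) := by
    funext ω
    rcases eq_or_ne (X ω) ⊤ with h | h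
    · rw [h, if_pos rfl]
    rcases eq_or_ne (X ω) ⊥ with h2 | h2
    · rw [h2, if_neg (by simp), if_pos rfl]
    · rw [if_neg h, if_neg h2, ← hcoe, EReal.coe_toReal h h2]
  rw [hfun]
  apply Measurable.ite (hX (measurableSet_singleton ⊤)) measurable_const
  apply Measurable.ite (hX (measurableSet_singleton ⊥)) measurable_const
  exact hφm.comp (measurable_ereal_toReal.comp hX)

lemma bot_case {Ω : Type*} [MeasurableSpace Ω] (μ : Measure Ω) [IsProbabilityMeasure μ]
    {X : Ω → EReal} (hX : Measurable X) {φ : ℝ → EReal} (hφ : ProperConvex φ)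
    {φe : EReal → EReal} (hcoe : ∀ x : ℝ, φe (x : EReal) = φ x)
    (htop : Tendsto φ atTop (nhds (φe ⊤)))
    (hbot : Tendsto φ atBot (nhds (φe ⊥)))
    (hPbot : ∫⁻ ω, (-(X ω)).toENNReal' ∂μ = ⊤)
    (hQ : QuasiIntegrable μ (fun ω => φe (X ω))) :
    φe ⊥ ≤ eInt μ (fun ω => φe (X ω)) := by
  set φ' : ℝ → EReal := fun x => φ (-x) with hφ'
  set φe' : EReal → EReal := fun x => φe (-x) with hφe'
  have hφ'p : ProperConvex φ' := by
    constructor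
    · intro x; exact hφ.ne_bot (-x)
    · obtain ⟨x, hx⟩ := hφ.exists_finite
      exact ⟨-x, by simpa [hφ'] using hx⟩
    · intro x y α h0 h1
      have hc := hφ.convex (-x) (-y) α h0 h1
      have heq : α * -x + (1 - α) * -y = -(α * x + (1 - α) * y) := by ring
      rw [heq] at hc
      exact hc
  have hcoe' : ∀ x : ℝ, φe' (x : EReal) = φ' x := by
    intro x
    show φe (-(x:EReal)) = φ (-x)
    rw [← EReal.coe_neg, hcoe]
  have htop' : Tendsto φ' atTop (nhds (φe' ⊤)) := by
    show Tendsto (fun x => φ (-x)) atTop (nhds (φe (-⊤)))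
    rw [EReal.neg_top]
    exact hbot.comp tendsto_neg_atTop_atBot
  have hbot' : Tendsto φ' atBot (nhds (φe' ⊥)) := by
    show Tendsto (fun x => φ (-x)) atBot (nhds (φe (-⊥)))
    rw [EReal.neg_bot]
    exact htop.comp tendsto_neg_atBot_atTop
  have hXeq : ∀ ω, φe' (-(X ω)) = φe (X ω) := fun ω => by
    show φe (-(-(X ω))) = φe (X ω)
    rw [neg_neg]
  have hP' : ∫⁻ ω, ((fun ω' => -(X ω')) ω).toENNReal' ∂μ = ⊤ := hPbot
  have hQ' : QuasiIntegrable μ (fun ω => φe' (-(X ω))) := by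
    unfold QuasiIntegrable at hQ ⊢
    simp only [hXeq]
    exact hQ
  have hres := top_case μ (X := fun ω => -(X ω)) hX.neg hφ'p hcoe' htop' hbot' hP' hQ'
  have h1 : φe' ⊤ = φe ⊥ := by
    show φe (-⊤) = φe ⊥
    rw [EReal.neg_top]
  have h2 : eInt μ (fun ω => φe' (-(X ω))) = eInt μ (fun ω => φe (X ω)) :=
    eInt_congr (ae_of_all _ hXeq)
  rw [h1, h2] at hres
  exact hres

end JensenAux

/-- **Jensen's inequality for quasi-integrable extended-real random variables.**
Let `X` be an extended-real-valued random variable and `φ` a proper convex function on `ℝ`,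
extended to `±∞` by its limits (`φe` is this extension). If `X` and `φe ∘ X` are both
quasi-integrable, then `φe (E[X]) ≤ E[φe ∘ X]`. Moreover, if `X` is integrable and `φ` is
strictly convex at `E[X]`, then equality holds if and only if `X = E[X]` almost surely. -/
theorem jensen_quasiIntegrable
    {Ω : Type*} [MeasurableSpace Ω] (μ : Measure Ω) [IsProbabilityMeasure μ]
    (X : Ω → EReal) (hX : Measurable X)
    (φ : ℝ → EReal) (hφ : ProperConvex φ)
    (φe : EReal → EReal)
    (hcoe : ∀ x : ℝ, φe (x : EReal) = φ x)
    (htop : Tendsto φ atTop (nhds (φe ⊤)))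
    (hbot : Tendsto φ atBot (nhds (φe ⊥)))
    (hXq : QuasiIntegrable μ X)
    (hφXq : QuasiIntegrable μ (fun ω => φe (X ω))) :
    φe (eInt μ X) ≤ eInt μ (fun ω => φe (X ω)) ∧
    ((∫⁻ ω, (X ω).toENNReal' ∂μ) < ⊤ → (∫⁻ ω, (-(X ω)).toENNReal' ∂μ) < ⊤ →
      StrictConvexAt φ (eInt μ X).toReal →
      (φe (eInt μ X) = eInt μ (fun ω => φe (X ω)) ↔ ∀ᵐ ω ∂μ, X ω = eInt μ X)) := by
  have hφm : Measurable φ := JensenAux.measurable_of_properConvex hφ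
  have hφeX : Measurable (fun ω => φe (X ω)) := JensenAux.measurable_phieX hX hφm hcoe
  constructor
  · by_cases hQp : ∫⁻ ω, (φe (X ω)).toENNReal' ∂μ = ⊤
    · have hQm : ∫⁻ ω, (-(φe (X ω))).toENNReal' ∂μ ≠ ⊤ := by
        rcases hφXq with h | h
        · exact absurd hQp h.ne
        · exact h.ne
      rw [JensenAux.eInt_eq_top hQp hQm]
      exact le_top
    by_cases hPp : ∫⁻ ω, (X ω).toENNReal' ∂μ = ⊤
    · have hPm : ∫⁻ ω, (-(X ω)).toENNReal' ∂μ ≠ ⊤ := by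
        rcases hXq with h | h
        · exact absurd hPp h.ne
        · exact h.ne
      rw [JensenAux.eInt_eq_top hPp hPm]
      exact JensenAux.top_case μ hX hφ hcoe htop hbot hPp hφXq
    by_cases hPm : ∫⁻ ω, (-(X ω)).toENNReal' ∂μ = ⊤
    · rw [JensenAux.eInt_eq_bot hPm]
      exact JensenAux.bot_case μ hX hφ hcoe htop hbot hPm hφXq
    · exact (JensenAux.main_case μ hX hφ hcoe hφeX hPp hPm hQp).1
  · intro hPp hPm hsc
    by_cases hQp : ∫⁻ ω, (φe (X ω)).toENNReal' ∂μ = ⊤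
    · have hQm : ∫⁻ ω, (-(φe (X ω))).toENNReal' ∂μ ≠ ⊤ := by
        rcases hφXq with h | h
        · exact absurd hQp h.ne
        · exact h.ne
      have hE : eInt μ (fun ω => φe (X ω)) = ⊤ := JensenAux.eInt_eq_top hQp hQm
      obtain ⟨hYint, hXae, heX⟩ := JensenAux.eInt_eq_integral hX hPp.ne hPm.ne
      set mr : ℝ := ∫ ω, (X ω).toReal ∂μ with hmr
      have hmrr : (eInt μ X).toReal = mr := by rw [heX]; rfl
      have hnt : φ mr ≠ ⊤ := hmrr ▸ JensenAux.strictConvexAt_ne_top hsc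
      constructor
      · intro heq
        exfalso
        rw [hE, heX, hcoe] at heq
        exact hnt heq
      · intro hae
        exfalso
        have hconst' : (fun ω => φe (X ω)) =ᵐ[μ] fun _ => φ mr := by
          filter_upwards [hae] with ω h
          rw [h, heX, hcoe]
        have hc : ∫⁻ ω, (φe (X ω)).toENNReal' ∂μ = (φ mr).toENNReal' := by
          have heq2 : (fun ω => (φe (X ω)).toENNReal') =ᵐ[μ] fun _ => (φ mr).toENNReal' :=
            hconst'.mono fun ω h => congrArg EReal.toENNReal' h
          rw [lintegral_congr_ae heq2, lintegral_const, measure_univ, mul_one]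
        rw [hQp] at hc
        exact hnt (JensenAux.tE_eq_top_iff.mp hc.symm)
    · exact (JensenAux.main_case μ hX hφ hcoe hφeX hPp.ne hPm.ne hQp).2 hsc
end
end

section
/- Let Z = (Z₁, …, Z_d) be an ℝ^d-valued random vector. Then every interpolating copula for Z is a copula for Z; in particular, each coordinate U_i of the defining vector U = (U₁, …, U_d) is uniformly distributed on [0,1], and the cdf C of U satisfies F_Z(z₁, …, z_d) = C(F_{Z₁}(z₁), …, F_{Z_d}(z_d)) for all z ∈ ℝ^d. -/
open MeasureTheory ProbabilityTheory Filter Set Topology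
open scoped ENNReal NNReal

noncomputable section

namespace InterpCopula

variable {Ω : Type*} [MeasurableSpace Ω] {μ : Measure Ω} [IsProbabilityMeasure μ]

/-- If the portion of `{X ∈ A}` below each `x ∈ A` is null, then `{X ∈ A}` is null. -/
lemma null_of_null_inter_Iic {X : Ω → ℝ} {A : Set ℝ}
    (h : ∀ x ∈ A, μ ({ω | X ω ∈ A} ∩ {ω | X ω ≤ x}) = 0) :
    μ {ω | X ω ∈ A} = 0 := by
  rcases A.eq_empty_or_nonempty with rfl | hne
  · simp
  by_cases hbdd : BddAbove A
  · have hcov : {ω | X ω ∈ A} ⊆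
        (⋃ n : ℕ, {ω | X ω ∈ A} ∩ {ω | X ω ≤ sSup A - 1/(n+1)}) ∪
          ({ω | X ω ∈ A} ∩ {ω | X ω = sSup A}) := by
      intro ω hω
      rcases eq_or_lt_of_le (le_csSup hbdd hω) with heq | hlt
      · exact Or.inr ⟨hω, heq⟩
      · obtain ⟨n, hn⟩ := exists_nat_one_div_lt (sub_pos.2 hlt)
        refine Or.inl (mem_iUnion.2 ⟨n, hω, ?_⟩)
        show X ω ≤ sSup A - 1/(n+1)
        push_cast at hn ⊢
        linarith
    refine measure_mono_null hcov (measure_union_null ?_ ?_)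
    · refine measure_iUnion_null fun n => ?_
      obtain ⟨x, hxA, hx⟩ := exists_lt_of_lt_csSup hne
        (show sSup A - 1/(n+1) < sSup A by
          have : (0:ℝ) < 1/(n+1) := by positivity
          linarith)
      refine measure_mono_null ?_ (h x hxA)
      exact fun ω ⟨h1, h2⟩ => ⟨h1, le_trans h2 hx.le⟩
    · by_cases hsA : sSup A ∈ A
      · refine measure_mono_null ?_ (h _ hsA)
        exact fun ω ⟨h1, h2⟩ => ⟨h1, h2.le⟩
      · have : {ω | X ω ∈ A} ∩ {ω | X ω = sSup A} = ∅ := by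
          ext ω; simp only [mem_inter_iff, mem_setOf_eq, mem_empty_iff_false, iff_false]
          rintro ⟨h1, h2⟩; exact hsA (h2 ▸ h1)
        simp [this]
  · rw [not_bddAbove_iff] at hbdd
    have hcov : {ω | X ω ∈ A} ⊆
        ⋃ n : ℕ, {ω | X ω ∈ A} ∩ {ω | X ω ≤ Classical.choose (hbdd n)} := by
      intro ω hω
      obtain ⟨n, hn⟩ := exists_nat_ge (X ω)
      have hc := Classical.choose_spec (hbdd n)
      exact mem_iUnion.2 ⟨n, hω, le_trans hn hc.2.le⟩
    refine measure_mono_null hcov (measure_iUnion_null fun n => ?_)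
    have hc := Classical.choose_spec (hbdd n)
    exact h _ hc.1

lemma measurable_of_countable_cases {S : Set ℝ} (hS : S.Countable) {X : Ω → ℝ}
    (hX : Measurable X) {f : ℝ → Ω → ℝ} (hf : ∀ x, Measurable (f x))
    {g : Ω → ℝ} (hg : Measurable g) {V : Ω → ℝ}
    (hVin : ∀ ω, X ω ∈ S → V ω = f (X ω) ω)
    (hVout : ∀ ω, X ω ∉ S → V ω = g ω) :
    Measurable V := by
  intro B hB
  have hpre : V ⁻¹' B =
      (⋃ x ∈ S, ({ω | X ω = x} ∩ f x ⁻¹' B)) ∪ ({ω | X ω ∉ S} ∩ g ⁻¹' B) := by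
    ext ω
    by_cases h : X ω ∈ S
    · simp only [mem_preimage, mem_union, mem_iUnion, mem_inter_iff, mem_setOf_eq]
      constructor
      · intro hb; rw [hVin ω h] at hb; exact Or.inl ⟨X ω, h, rfl, hb⟩
      · rintro (⟨x, hxS, hx, hb⟩ | ⟨hns, _⟩)
        · rw [hVin ω h, hx]; exact hb
        · exact absurd h hns
    · simp only [mem_preimage, mem_union, mem_iUnion, mem_inter_iff, mem_setOf_eq]
      constructor
      · intro hb; rw [hVout ω h] at hb; exact Or.inr ⟨h, hb⟩
      · rintro (⟨x, hxS, hx, hb⟩ | ⟨_, hb⟩)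
        · exact absurd (hx ▸ hxS) h
        · rw [hVout ω h]; exact hb
  rw [hpre]
  refine MeasurableSet.union ?_ ?_
  · exact MeasurableSet.biUnion hS fun x _ =>
      (hX (measurableSet_singleton x)).inter (hf x hB)
  · exact (hX hS.measurableSet.compl).inter (hg hB)

lemma coord_meas {X : Ω → ℝ} (hX : Measurable X) {Tf : ℝ → Ω → ℝ}
    (hTf : ∀ x, Measurable (Tf x)) {V : Ω → ℝ}
    (hV : ∀ ω, V ω = (μ {ω' | X ω' < X ω}).toReal +
      (μ {ω' | X ω' = X ω}).toReal * Tf (X ω) ω) : Measurable V := by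
  have hmono : Monotone (fun t : ℝ => (μ {ω'' | X ω'' < t}).toReal) := by
    intro s t hst
    exact ENNReal.toReal_mono (measure_ne_top μ _)
      (measure_mono fun ω (h : X ω < s) => lt_of_lt_of_le h hst)
  refine measurable_of_countable_cases (S := {x : ℝ | 0 < μ {ω' | X ω' = x}})
    (f := fun x ω' => (μ {ω'' | X ω'' < x}).toReal + (μ {ω'' | X ω'' = x}).toReal * Tf x ω')
    (g := (fun t => (μ {ω'' | X ω'' < t}).toReal) ∘ X)
    (Measure.countable_meas_level_set_pos hX) hX
    (fun x => measurable_const.add ((hTf x).const_mul _))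
    (hmono.measurable.comp hX) (fun ω _ => hV ω) (fun ω h => ?_)
  have h0 : μ {ω' | X ω' = X ω} = 0 := by simpa using h
  rw [hV ω, h0]
  simp [Function.comp]


lemma add_eq {X : Ω → ℝ} (hX : Measurable X) (x : ℝ) :
    μ {ω | X ω ≤ x} = μ {ω | X ω < x} + μ {ω | X ω = x} := by
  have h : {ω | X ω ≤ x} = {ω | X ω < x} ∪ {ω | X ω = x} := by
    ext ω; simp only [mem_setOf_eq, mem_union]; exact le_iff_lt_or_eq
  rw [h]
  exact measure_union (Set.disjoint_left.mpr (fun ω h1 h2 => absurd h2 (ne_of_lt h1)))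
    (hX (measurableSet_singleton x))

/-- The good event. -/
def G (μ : Measure Ω) (X : Ω → ℝ) (Tf : ℝ → Ω → ℝ) : Set Ω :=
  {ω | 0 < μ {ω' | X ω' = X ω} → Tf (X ω) ω ∈ Set.Ioc (0:ℝ) 1}

lemma G_compl_null {X : Ω → ℝ} (hX : Measurable X) {Tf : ℝ → Ω → ℝ}
    (hTf : ∀ x, Measurable (Tf x))
    (hTu : ∀ x, 0 < μ {ω | X ω = x} →
      μ.map (Tf x) = (volume : Measure ℝ).restrict (Set.Icc 0 1)) :
    μ (G μ X Tf)ᶜ = 0 := by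
  have hsub : (G μ X Tf)ᶜ ⊆
      ⋃ x ∈ {x : ℝ | 0 < μ {ω | X ω = x}}, ({ω | X ω = x} ∩ Tf x ⁻¹' (Set.Ioc (0:ℝ) 1)ᶜ) := by
    intro ω hω
    simp only [G, mem_compl_iff, mem_setOf_eq, Classical.not_imp] at hω
    exact mem_biUnion hω.1 ⟨rfl, hω.2⟩
  refine measure_mono_null hsub ?_
  rw [measure_biUnion_null_iff (Measure.countable_meas_level_set_pos hX)]
  intro x hx
  refine measure_mono_null inter_subset_right ?_
  have h1 : μ (Tf x ⁻¹' (Set.Ioc (0:ℝ) 1)ᶜ) = (μ.map (Tf x)) (Set.Ioc (0:ℝ) 1)ᶜ := by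
    rw [Measure.map_apply (hTf x) measurableSet_Ioc.compl]
  rw [h1, hTu x hx, Measure.restrict_apply measurableSet_Ioc.compl]
  have h2 : (Set.Ioc (0:ℝ) 1)ᶜ ∩ Set.Icc 0 1 = {0} := by
    ext y
    simp only [mem_inter_iff, mem_compl_iff, mem_Ioc, mem_Icc, mem_singleton_iff, not_and_or,
      not_lt, not_le]
    constructor
    · rintro ⟨h1 | h1, h2, h3⟩ <;> linarith
    · rintro rfl; exact ⟨Or.inl le_rfl, le_rfl, zero_le_one⟩
  rw [h2]
  simp

lemma V_le_on_G {X : Ω → ℝ} (hX : Measurable X) {Tf : ℝ → Ω → ℝ} {V : Ω → ℝ}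
    (hV : ∀ ω, V ω = (μ {ω' | X ω' < X ω}).toReal +
      (μ {ω' | X ω' = X ω}).toReal * Tf (X ω) ω)
    {ω : Ω} (hω : ω ∈ G μ X Tf) : V ω ≤ (μ {ω' | X ω' ≤ X ω}).toReal := by
  rw [hV ω, add_eq hX (X ω), ENNReal.toReal_add (measure_ne_top μ _) (measure_ne_top μ _)]
  gcongr
  by_cases hp : 0 < μ {ω' | X ω' = X ω}
  · have ht := hω hp
    calc (μ {ω' | X ω' = X ω}).toReal * Tf (X ω) ω
        ≤ (μ {ω' | X ω' = X ω}).toReal * 1 := by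
          exact mul_le_mul_of_nonneg_left ht.2 ENNReal.toReal_nonneg
      _ = (μ {ω' | X ω' = X ω}).toReal := mul_one _
  · have h0 : μ {ω' | X ω' = X ω} = 0 := by simpa using hp
    simp [h0]

lemma V_ge_on_G {X : Ω → ℝ} {Tf : ℝ → Ω → ℝ} {V : Ω → ℝ}
    (hV : ∀ ω, V ω = (μ {ω' | X ω' < X ω}).toReal +
      (μ {ω' | X ω' = X ω}).toReal * Tf (X ω) ω)
    {ω : Ω} (hω : ω ∈ G μ X Tf) : (μ {ω' | X ω' < X ω}).toReal ≤ V ω := by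
  rw [hV ω]
  have h : 0 ≤ (μ {ω' | X ω' = X ω}).toReal * Tf (X ω) ω := by
    by_cases hp : 0 < μ {ω' | X ω' = X ω}
    · exact mul_nonneg ENNReal.toReal_nonneg (hω hp).1.le
    · have h0 : μ {ω' | X ω' = X ω} = 0 := by simpa using hp
      simp [h0]
  linarith

/-- On `G`, if `V ω ≤ F⁻(X ω)` then `X ω` is not an atom and `V ω = F⁻(X ω)`. -/
lemma V_eq_of_le_on_G {X : Ω → ℝ} {Tf : ℝ → Ω → ℝ} {V : Ω → ℝ}
    (hV : ∀ ω, V ω = (μ {ω' | X ω' < X ω}).toReal +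
      (μ {ω' | X ω' = X ω}).toReal * Tf (X ω) ω)
    {ω : Ω} (hω : ω ∈ G μ X Tf)
    (hle : V ω ≤ (μ {ω' | X ω' < X ω}).toReal) :
    μ {ω' | X ω' = X ω} = 0 ∧ V ω = (μ {ω' | X ω' < X ω}).toReal := by
  by_cases hp : 0 < μ {ω' | X ω' = X ω}
  · exfalso
    have ht := hω hp
    have hppos : 0 < (μ {ω' | X ω' = X ω}).toReal :=
      ENNReal.toReal_pos hp.ne' (measure_ne_top μ _)
    have hmul : 0 < (μ {ω' | X ω' = X ω}).toReal * Tf (X ω) ω := mul_pos hppos ht.1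
    rw [hV ω] at hle; linarith
  · have h0 : μ {ω' | X ω' = X ω} = 0 := by simpa using hp
    refine ⟨h0, ?_⟩
    rw [hV ω, h0]; simp

lemma measure_inter_of_compl_null {G : Set Ω} (hG : μ Gᶜ = 0) (s : Set Ω) :
    μ (s ∩ G) = μ s := by
  refine le_antisymm (measure_mono inter_subset_left) ?_
  calc μ s = μ (s ∩ G ∪ s ∩ Gᶜ) := by rw [inter_union_compl]
    _ ≤ μ (s ∩ G) + μ (s ∩ Gᶜ) := measure_union_le _ _
    _ = μ (s ∩ G) + 0 := by rw [measure_mono_null inter_subset_right hG]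
    _ = μ (s ∩ G) := add_zero _


lemma split_Ioc {X : Ω → ℝ} (hX : Measurable X) {z x : ℝ} (hzx : z ≤ x) :
    μ {ω | X ω ≤ x} = μ {ω | X ω ≤ z} + μ {ω | z < X ω ∧ X ω ≤ x} := by
  have h : {ω | X ω ≤ x} = {ω | X ω ≤ z} ∪ {ω | z < X ω ∧ X ω ≤ x} := by
    ext ω; simp only [mem_setOf_eq, mem_union]
    constructor
    · intro hx; rcases le_or_gt (X ω) z with h | h
      · exact Or.inl h
      · exact Or.inr ⟨h, hx⟩
    · rintro (h | ⟨h1, h2⟩)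
      · exact le_trans h hzx
      · exact h2
  rw [h]
  exact measure_union (Set.disjoint_left.mpr (fun ω h1 h2 => absurd h2.1 (not_lt.2 h1)))
    ((hX measurableSet_Ioi).inter (hX measurableSet_Iic))

/-- Coordinatewise: `{X ≤ z}` and `{V ≤ F(z)}` differ by a null set. -/
lemma coord_diff_null {X : Ω → ℝ} (hX : Measurable X) {Tf : ℝ → Ω → ℝ}
    (hTf : ∀ x, Measurable (Tf x))
    (hTu : ∀ x, 0 < μ {ω | X ω = x} →
      μ.map (Tf x) = (volume : Measure ℝ).restrict (Set.Icc 0 1))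
    {V : Ω → ℝ}
    (hV : ∀ ω, V ω = (μ {ω' | X ω' < X ω}).toReal +
      (μ {ω' | X ω' = X ω}).toReal * Tf (X ω) ω) (z : ℝ) :
    μ ({ω | X ω ≤ z} \ {ω | V ω ≤ (μ {ω' | X ω' ≤ z}).toReal}) = 0 ∧
    μ ({ω | V ω ≤ (μ {ω' | X ω' ≤ z}).toReal} \ {ω | X ω ≤ z}) = 0 := by
  have hGnull := G_compl_null hX hTf hTu
  constructor
  · refine measure_mono_null ?_ hGnull
    rintro ω ⟨h1, h2⟩
    simp only [mem_setOf_eq] at h1 h2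
    intro hωG
    refine h2 (le_trans (V_le_on_G hX hV hωG) ?_)
    exact ENNReal.toReal_mono (measure_ne_top μ _)
      (measure_mono (fun ω' (h' : X ω' ≤ X ω) => le_trans h' h1))
  · set A : Set ℝ := {x | z < x ∧ μ {ω' | X ω' = x} = 0 ∧
      μ {ω' | X ω' < x} = μ {ω' | X ω' ≤ z}} with hA
    have hsub : ({ω | V ω ≤ (μ {ω' | X ω' ≤ z}).toReal} \ {ω | X ω ≤ z}) ∩ G μ X Tf
        ⊆ {ω | X ω ∈ A} := by
      rintro ω ⟨⟨h1, h2⟩, hωG⟩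
      simp only [mem_setOf_eq] at h1 h2
      have hzlt : z < X ω := not_le.1 h2
      have hle2 : μ {ω' | X ω' ≤ z} ≤ μ {ω' | X ω' < X ω} :=
        measure_mono (fun ω' (h' : X ω' ≤ z) => lt_of_le_of_lt h' hzlt)
      have hle2' : (μ {ω' | X ω' ≤ z}).toReal ≤ (μ {ω' | X ω' < X ω}).toReal :=
        ENNReal.toReal_mono (measure_ne_top μ _) hle2
      obtain ⟨hp0, hVeq⟩ := V_eq_of_le_on_G hV hωG (le_trans h1 hle2')
      have heq : (μ {ω' | X ω' < X ω}).toReal = (μ {ω' | X ω' ≤ z}).toReal :=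
        le_antisymm (hVeq ▸ h1) hle2'
      exact ⟨hzlt, hp0,
        (ENNReal.toReal_eq_toReal_iff' (measure_ne_top μ _) (measure_ne_top μ _)).1 heq⟩
    have hAnull : μ {ω | X ω ∈ A} = 0 := by
      refine null_of_null_inter_Iic (fun x hx => ?_)
      obtain ⟨hzx, hp0, hFm⟩ := hx
      have key : μ {ω | z < X ω ∧ X ω ≤ x} = 0 := by
        have h1 : μ {ω | X ω ≤ x} = μ {ω | X ω ≤ z} := by
          rw [add_eq hX x, hp0, add_zero, hFm]
        have h2 := split_Ioc hX (le_of_lt hzx) (μ := μ) (X := X)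
        rw [h1] at h2
        have := (ENNReal.add_right_inj (measure_ne_top μ _)).1
          (by rw [← h2, add_zero] :
            μ {ω | X ω ≤ z} + (0:ℝ≥0∞) = μ {ω | X ω ≤ z} + μ {ω | z < X ω ∧ X ω ≤ x})
        exact this.symm
      refine measure_mono_null ?_ key
      rintro ω ⟨hωA, hωx⟩
      exact ⟨hωA.1, hωx⟩
    have := measure_inter_of_compl_null hGnull
      ({ω | V ω ≤ (μ {ω' | X ω' ≤ z}).toReal} \ {ω | X ω ≤ z})
    rw [← this]
    exact measure_mono_null hsub hAnull


/-- The interpolated variable is uniform on `[0,1]`. -/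
lemma coord_unif {X : Ω → ℝ} (hX : Measurable X) {Tf : ℝ → Ω → ℝ}
    (hTf : ∀ x, Measurable (Tf x))
    (hTu : ∀ x, 0 < μ {ω | X ω = x} →
      μ.map (Tf x) = (volume : Measure ℝ).restrict (Set.Icc 0 1))
    (hind : ∀ x, IndepFun (Tf x) X μ)
    {V : Ω → ℝ}
    (hV : ∀ ω, V ω = (μ {ω' | X ω' < X ω}).toReal +
      (μ {ω' | X ω' = X ω}).toReal * Tf (X ω) ω) :
    μ.map V = (volume : Measure ℝ).restrict (Set.Icc 0 1) := by
  have hVmeas : Measurable V := coord_meas hX hTf hV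
  have hGnull := G_compl_null hX hTf hTu
  haveI : IsProbabilityMeasure (μ.map V) := Measure.isProbabilityMeasure_map hVmeas.aemeasurable
  haveI : IsFiniteMeasure ((volume : Measure ℝ).restrict (Set.Icc 0 1)) := by
    constructor
    rw [Measure.restrict_apply_univ, Real.volume_Icc]
    exact ENNReal.ofReal_lt_top
  refine Measure.ext_of_Iic _ _ (fun u => ?_)
  rw [Measure.map_apply hVmeas measurableSet_Iic, Measure.restrict_apply measurableSet_Iic]
  have hpreim : V ⁻¹' (Set.Iic u) = {ω | V ω ≤ u} := rfl
  rw [hpreim]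
  rcases lt_or_ge u 0 with hu0 | hu0
  · -- u < 0
    have hR : Set.Iic u ∩ Set.Icc (0:ℝ) 1 = ∅ := by
      ext y
      simp only [mem_inter_iff, mem_Iic, mem_Icc, mem_empty_iff_false, iff_false]
      rintro ⟨h1, h2, h3⟩
      linarith
    rw [hR, measure_empty, ← measure_inter_of_compl_null hGnull {ω | V ω ≤ u}]
    have hempty : {ω | V ω ≤ u} ∩ G μ X Tf = ∅ := by
      ext ω
      simp only [mem_inter_iff, mem_setOf_eq, mem_empty_iff_false, iff_false]
      rintro ⟨h1, h2⟩
      have h3 := V_ge_on_G hV h2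
      have h4 : (0:ℝ) ≤ (μ {ω' | X ω' < X ω}).toReal := ENNReal.toReal_nonneg
      linarith
    rw [hempty, measure_empty]
  rcases le_or_gt 1 u with hu1 | hu1
  · -- 1 ≤ u
    have hR : Set.Iic u ∩ Set.Icc (0:ℝ) 1 = Set.Icc 0 1 :=
      inter_eq_right.2 (fun y hy => le_trans hy.2 hu1)
    rw [hR, Real.volume_Icc, sub_zero, ENNReal.ofReal_one]
    refine le_antisymm prob_le_one ?_
    have hsub : G μ X Tf ⊆ {ω | V ω ≤ u} := by
      intro ω hω
      have h1 := V_le_on_G hX hV hω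
      have h2 : (μ {ω' | X ω' ≤ X ω}).toReal ≤ 1 := by
        rw [← ENNReal.toReal_one]
        exact ENNReal.toReal_mono ENNReal.one_ne_top prob_le_one
      show V ω ≤ u
      linarith
    calc (1:ℝ≥0∞) = μ univ := measure_univ.symm
      _ ≤ μ (G μ X Tf) + μ (G μ X Tf)ᶜ := by
          rw [← union_compl_self (G μ X Tf)]
          exact measure_union_le _ _
      _ = μ (G μ X Tf) := by rw [hGnull, add_zero]
      _ ≤ μ {ω | V ω ≤ u} := measure_mono hsub
  · -- 0 ≤ u < 1
    have hR : Set.Iic u ∩ Set.Icc (0:ℝ) 1 = Set.Icc 0 u := by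
      ext y
      simp only [mem_inter_iff, mem_Iic, mem_Icc]
      constructor
      · rintro ⟨h1, h2, h3⟩; exact ⟨h2, h1⟩
      · rintro ⟨h1, h2⟩; exact ⟨h2, h1, le_trans h2 hu1.le⟩
    rw [hR, Real.volume_Icc, sub_zero]
    rcases eq_or_lt_of_le hu0 with hu0' | hu0'
    · -- u = 0
      rw [← hu0', ENNReal.ofReal_zero,
        ← measure_inter_of_compl_null hGnull {ω | V ω ≤ 0}]
      have hsub : {ω | V ω ≤ 0} ∩ G μ X Tf ⊆
          {ω | X ω ∈ {x | μ {ω' | X ω' = x} = 0 ∧ μ {ω' | X ω' < x} = 0}} := by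
        rintro ω ⟨h1, h2⟩
        have h3 : V ω ≤ (μ {ω' | X ω' < X ω}).toReal :=
          le_trans h1 ENNReal.toReal_nonneg
        obtain ⟨hp0, hVeq⟩ := V_eq_of_le_on_G hV h2 h3
        have h4 : (μ {ω' | X ω' < X ω}).toReal = 0 :=
          le_antisymm (by rw [← hVeq]; exact h1) ENNReal.toReal_nonneg
        exact ⟨hp0, (((μ {ω' | X ω' < X ω}).toReal_eq_zero_iff).1 h4).resolve_right
          (measure_ne_top μ _)⟩
      refine measure_mono_null hsub (null_of_null_inter_Iic (fun x hx => ?_))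
      refine measure_mono_null inter_subset_right ?_
      rw [add_eq hX x, hx.1, hx.2, add_zero]
    · -- 0 < u < 1
      set Q : Set ℝ := {x : ℝ | ENNReal.ofReal u ≤ μ {ω | X ω ≤ x}} with hQ
      have hQne : Q.Nonempty := by
        have hmono : Monotone (fun n : ℕ => {ω | X ω ≤ (n:ℝ)}) := by
          intro n m hnm ω (h : X ω ≤ _)
          exact le_trans h (by exact_mod_cast Nat.cast_le.2 hnm)
        have htend := tendsto_measure_iUnion_atTop (μ := μ) hmono
        have huniv : (⋃ n : ℕ, {ω | X ω ≤ (n:ℝ)}) = univ := by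
          ext ω
          simp only [mem_iUnion, mem_setOf_eq, mem_univ, iff_true]
          exact exists_nat_ge (X ω)
        rw [huniv, measure_univ] at htend
        have hlt : ENNReal.ofReal u < 1 := ENNReal.ofReal_lt_one.2 hu1
        obtain ⟨n, hn⟩ := (htend.eventually (lt_mem_nhds hlt)).exists
        exact ⟨(n:ℝ), le_of_lt hn⟩
      have hQbdd : BddBelow Q := by
        have hanti : Antitone (fun n : ℕ => {ω | X ω ≤ -(n:ℝ)}) := by
          intro n m hnm ω (h : X ω ≤ _)
          refine le_trans h ?_
          simp only [neg_le_neg_iff]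
          exact_mod_cast hnm
        have htend := tendsto_measure_iInter_atTop (μ := μ)
          (s := fun n : ℕ => {ω | X ω ≤ -(n:ℝ)})
          (fun n => (hX measurableSet_Iic).nullMeasurableSet) hanti ⟨0, measure_ne_top μ _⟩
        have hempty : (⋂ n : ℕ, {ω | X ω ≤ -(n:ℝ)}) = ∅ := by
          ext ω
          simp only [mem_iInter, mem_setOf_eq, mem_empty_iff_false, iff_false, not_forall]
          obtain ⟨n, hn⟩ := exists_nat_gt (-(X ω))
          exact ⟨n, by push_neg; linarith⟩
        rw [hempty, measure_empty] at htend
        have hpos : (0:ℝ≥0∞) < ENNReal.ofReal u := ENNReal.ofReal_pos.2 hu0'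
        obtain ⟨m, hm⟩ := (htend.eventually (gt_mem_nhds hpos)).exists
        refine ⟨-(m:ℝ), fun q hq => ?_⟩
        by_contra hql
        push_neg at hql
        have hmm : μ {ω | X ω ≤ q} ≤ μ {ω | X ω ≤ -(m:ℝ)} :=
          measure_mono (fun ω (h : X ω ≤ q) => le_trans h hql.le)
        exact absurd (le_trans hq hmm) (not_le.2 hm)
      set xs := sInf Q with hxs
      have hxs_upper : ENNReal.ofReal u ≤ μ {ω | X ω ≤ xs} := by
        have hanti : Antitone (fun n : ℕ => {ω | X ω ≤ xs + 1/(n+1)}) := by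
          intro n m hnm ω (h : X ω ≤ _)
          refine le_trans h ?_
          have h1 : (1:ℝ)/(m+1) ≤ 1/(n+1) := by
            apply one_div_le_one_div_of_le
            · positivity
            · have : (n:ℝ) ≤ (m:ℝ) := by exact_mod_cast hnm
              linarith
          linarith
        have hint : (⋂ n : ℕ, {ω | X ω ≤ xs + 1/(n+1)}) = {ω | X ω ≤ xs} := by
          ext ω
          simp only [mem_iInter, mem_setOf_eq]
          constructor
          · intro h
            by_contra hgt
            push_neg at hgt
            obtain ⟨n, hn⟩ := exists_nat_one_div_lt (sub_pos.2 hgt)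
            have h2 := h n
            linarith
          · intro h n
            have h3 : (0:ℝ) < 1/(n+1) := by positivity
            linarith
        have htend := tendsto_measure_iInter_atTop (μ := μ)
          (s := fun n : ℕ => {ω | X ω ≤ xs + 1/(n+1)})
          (fun n => (hX measurableSet_Iic).nullMeasurableSet) hanti ⟨0, measure_ne_top μ _⟩
        rw [hint] at htend
        refine ge_of_tendsto htend (Eventually.of_forall fun n => ?_)
        have hlt' : xs < xs + 1/(n+1) := by
          have h3 : (0:ℝ) < 1/(n+1) := by positivity
          linarith
        obtain ⟨q, hqQ, hq⟩ := exists_lt_of_csInf_lt hQne hlt'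
        exact le_trans hqQ (measure_mono fun ω (h : X ω ≤ q) => le_trans h hq.le)
      have hxs_lower : μ {ω | X ω < xs} ≤ ENNReal.ofReal u := by
        have hmono2 : Monotone (fun n : ℕ => {ω | X ω ≤ xs - 1/(n+1)}) := by
          intro n m hnm ω (h : X ω ≤ _)
          refine le_trans h ?_
          have h1 : (1:ℝ)/(m+1) ≤ 1/(n+1) := by
            apply one_div_le_one_div_of_le
            · positivity
            · have : (n:ℝ) ≤ (m:ℝ) := by exact_mod_cast hnm
              linarith
          linarith
        have hun : (⋃ n : ℕ, {ω | X ω ≤ xs - 1/(n+1)}) = {ω | X ω < xs} := by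
          ext ω
          simp only [mem_iUnion, mem_setOf_eq]
          constructor
          · rintro ⟨n, hn⟩
            have h3 : (0:ℝ) < 1/(n+1) := by positivity
            linarith
          · intro h
            obtain ⟨n, hn⟩ := exists_nat_one_div_lt (sub_pos.2 h)
            exact ⟨n, by linarith⟩
        have htend := tendsto_measure_iUnion_atTop (μ := μ) hmono2
        rw [hun] at htend
        refine le_of_tendsto htend (Eventually.of_forall fun n => ?_)
        have hnot : ¬ (ENNReal.ofReal u ≤ μ {ω | X ω ≤ xs - 1/(n+1)}) := by
          intro hmem
          have h4 := csInf_le hQbdd (show xs - 1/(n+1) ∈ Q from hmem)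
          rw [← hxs] at h4
          have h3 : (0:ℝ) < 1/(n+1) := by positivity
          linarith
        exact (not_le.1 hnot).le
      set a := (μ {ω | X ω < xs}).toReal with ha
      set p := (μ {ω | X ω = xs}).toReal with hp
      have ha0 : 0 ≤ a := ENNReal.toReal_nonneg
      have ha_le : a ≤ u := by
        have h1 := ENNReal.toReal_mono ENNReal.ofReal_ne_top hxs_lower
        rwa [ENNReal.toReal_ofReal hu0] at h1
      have hu_le : u ≤ a + p := by
        have h1 := ENNReal.toReal_mono (measure_ne_top μ _) hxs_upper
        rwa [ENNReal.toReal_ofReal hu0, add_eq hX xs,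
          ENNReal.toReal_add (measure_ne_top μ _) (measure_ne_top μ _)] at h1
      have hWmeas : MeasurableSet {ω | a + p * Tf xs ω ≤ u} :=
        measurableSet_le (measurable_const.add ((hTf xs).const_mul p)) measurable_const
      have claim1 : ({ω | X ω < xs} ∪ {ω | X ω = xs} ∩ {ω | a + p * Tf xs ω ≤ u})
          ∩ G μ X Tf ⊆ {ω | V ω ≤ u} := by
        rintro ω ⟨hω, hωG⟩
        rcases hω with hDω | ⟨hEω, hWω⟩
        · have h1 := V_le_on_G hX hV hωG
          have h2 : (μ {ω' | X ω' ≤ X ω}).toReal ≤ a :=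
            ENNReal.toReal_mono (measure_ne_top μ _)
              (measure_mono fun ω' (h' : X ω' ≤ X ω) => lt_of_le_of_lt h' hDω)
          show V ω ≤ u
          linarith
        · show V ω ≤ u
          have h2 : V ω = a + p * Tf xs ω := by
            rw [hV ω, hEω, ← ha, ← hp]
          rw [h2]
          exact hWω
      have claim2 : {ω | V ω ≤ u} ∩ G μ X Tf ⊆
          ({ω | X ω < xs} ∪ {ω | X ω = xs} ∩ {ω | a + p * Tf xs ω ≤ u}) ∪
            {ω | X ω ∈ {x | xs < x ∧ μ {ω' | X ω' = x} = 0 ∧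
              (μ {ω' | X ω' < x}).toReal = u}} := by
        rintro ω ⟨hVu, hωG⟩
        rcases lt_trichotomy (X ω) xs with hlt | heq | hgt
        · exact Or.inl (Or.inl hlt)
        · refine Or.inl (Or.inr ⟨heq, ?_⟩)
          show a + p * Tf xs ω ≤ u
          have h2 : V ω = a + p * Tf xs ω := by
            rw [hV ω, heq, ← ha, ← hp]
          rw [← h2]
          exact hVu
        · have h1 : ENNReal.ofReal u ≤ μ {ω' | X ω' < X ω} := by
            obtain ⟨q, hqQ, hq⟩ := exists_lt_of_csInf_lt hQne hgt
            exact le_trans hqQ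
              (measure_mono fun ω' (h' : X ω' ≤ q) => lt_of_le_of_lt h' hq)
          have h2 : u ≤ (μ {ω' | X ω' < X ω}).toReal := by
            have h3 := ENNReal.toReal_mono (measure_ne_top μ _) h1
            rwa [ENNReal.toReal_ofReal hu0] at h3
          obtain ⟨hp0, hVeq⟩ := V_eq_of_le_on_G hV hωG (le_trans hVu h2)
          exact Or.inr ⟨hgt, hp0, le_antisymm (by rw [← hVeq]; exact hVu) h2⟩
      have hAnull : μ {ω | X ω ∈ {x | xs < x ∧ μ {ω' | X ω' = x} = 0 ∧
          (μ {ω' | X ω' < x}).toReal = u}} = 0 := by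
        refine null_of_null_inter_Iic (fun x hx => ?_)
        obtain ⟨hzx, hp0, hFm⟩ := hx
        have hlex : μ {ω | X ω ≤ x} = ENNReal.ofReal u := by
          rw [add_eq hX x, hp0, add_zero, ← hFm,
            ENNReal.ofReal_toReal (measure_ne_top μ _)]
        have hsplit := split_Ioc (μ := μ) hX (le_of_lt hzx)
        have hkey : μ {ω | xs < X ω ∧ X ω ≤ x} = 0 := by
          have h1 : μ {ω | X ω ≤ xs} + μ {ω | xs < X ω ∧ X ω ≤ x} ≤
              μ {ω | X ω ≤ xs} + 0 := by
            rw [add_zero, ← hsplit, hlex]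
            exact hxs_upper
          have h2 := (ENNReal.add_le_add_iff_left (measure_ne_top μ _)).1 h1
          exact le_antisymm h2 (zero_le)
        refine measure_mono_null ?_ hkey
        rintro ω ⟨hωA, hωx⟩
        exact ⟨hωA.1, hωx⟩
      have hmain : μ {ω | V ω ≤ u} =
          μ ({ω | X ω < xs} ∪ {ω | X ω = xs} ∩ {ω | a + p * Tf xs ω ≤ u}) := by
        refine le_antisymm ?_ ?_
        · rw [← measure_inter_of_compl_null hGnull {ω | V ω ≤ u}]
          calc μ ({ω | V ω ≤ u} ∩ G μ X Tf)
              ≤ μ (({ω | X ω < xs} ∪ {ω | X ω = xs} ∩ {ω | a + p * Tf xs ω ≤ u}) ∪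
                {ω | X ω ∈ {x | xs < x ∧ μ {ω' | X ω' = x} = 0 ∧
                  (μ {ω' | X ω' < x}).toReal = u}}) := measure_mono claim2
            _ ≤ μ ({ω | X ω < xs} ∪ {ω | X ω = xs} ∩ {ω | a + p * Tf xs ω ≤ u}) +
                μ {ω | X ω ∈ {x | xs < x ∧ μ {ω' | X ω' = x} = 0 ∧
                  (μ {ω' | X ω' < x}).toReal = u}} := measure_union_le _ _
            _ = μ ({ω | X ω < xs} ∪ {ω | X ω = xs} ∩ {ω | a + p * Tf xs ω ≤ u}) := by
                rw [hAnull, add_zero]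
        · rw [← measure_inter_of_compl_null hGnull
            ({ω | X ω < xs} ∪ {ω | X ω = xs} ∩ {ω | a + p * Tf xs ω ≤ u})]
          exact measure_mono claim1
      have hdisj : Disjoint {ω | X ω < xs}
          ({ω | X ω = xs} ∩ {ω | a + p * Tf xs ω ≤ u}) :=
        Set.disjoint_left.mpr (fun ω h1 h2 => absurd h2.1 (ne_of_lt h1))
      rw [hmain, measure_union hdisj
        (show MeasurableSet ({ω | X ω = xs} ∩ {ω | a + p * Tf xs ω ≤ u}) from
          (hX (measurableSet_singleton xs)).inter hWmeas)]
      have hDval : μ {ω | X ω < xs} = ENNReal.ofReal a := by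
        rw [ha]
        exact (ENNReal.ofReal_toReal (measure_ne_top μ _)).symm
      by_cases hpz : μ {ω | X ω = xs} = 0
      · have hp' : p = 0 := by rw [hp, hpz, ENNReal.toReal_zero]
        have hEW : μ ({ω | X ω = xs} ∩ {ω | a + p * Tf xs ω ≤ u}) = 0 :=
          measure_mono_null inter_subset_left hpz
        have hau : a = u := le_antisymm ha_le (by rw [hp'] at hu_le; linarith)
        rw [hDval, hEW, add_zero, hau]
      · have hppos : 0 < μ {ω | X ω = xs} := pos_iff_ne_zero.2 hpz
        have hpr : 0 < p := ENNReal.toReal_pos hpz (measure_ne_top μ _)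
        have ht0 : 0 ≤ (u - a) / p := div_nonneg (by linarith) hpr.le
        have ht1 : (u - a) / p ≤ 1 := (div_le_one hpr).2 (by linarith)
        have hiff : ∀ τ : ℝ, (a + p * τ ≤ u ↔ τ ≤ (u - a) / p) := by
          intro τ
          rw [le_div_iff₀ hpr, mul_comm]
          constructor <;> intro h <;> linarith
        have hWt : {ω | X ω = xs} ∩ {ω | a + p * Tf xs ω ≤ u}
            = Tf xs ⁻¹' (Set.Iic ((u - a) / p)) ∩ X ⁻¹' {xs} := by
          ext ω
          simp only [mem_inter_iff, mem_setOf_eq, mem_preimage, mem_Iic, mem_singleton_iff]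
          rw [hiff (Tf xs ω)]
          exact and_comm
        have hTmap : μ (Tf xs ⁻¹' (Set.Iic ((u - a) / p))) =
            ENNReal.ofReal ((u - a) / p) := by
          rw [← Measure.map_apply (hTf xs) measurableSet_Iic, hTu xs hppos,
            Measure.restrict_apply measurableSet_Iic]
          have h3 : Set.Iic ((u - a) / p) ∩ Set.Icc (0:ℝ) 1 = Set.Icc 0 ((u - a) / p) := by
            ext y
            simp only [mem_inter_iff, mem_Iic, mem_Icc]
            constructor
            · rintro ⟨h1, h2, _⟩; exact ⟨h2, h1⟩
            · rintro ⟨h1, h2⟩; exact ⟨h2, h1, le_trans h2 ht1⟩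
          rw [h3, Real.volume_Icc, sub_zero]
        have hind' := (hind xs).measure_inter_preimage_eq_mul
          (Set.Iic ((u - a) / p)) {xs} measurableSet_Iic (measurableSet_singleton xs)
        have hXxs : μ (X ⁻¹' {xs}) = ENNReal.ofReal p := by
          rw [hp]
          exact (ENNReal.ofReal_toReal (measure_ne_top μ _)).symm
        have harith : a + (u - a) / p * p = u := by
          field_simp
          ring
        rw [hWt, hind', hTmap, hXxs, hDval, ← ENNReal.ofReal_mul ht0,
          ← ENNReal.ofReal_add ha0 (mul_nonneg ht0 (le_of_lt hpr)), harith]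


end InterpCopula


/-- **An interpolating copula is a copula.** Let `Z = (Z₁, …, Z_d)` be an `ℝ^d`-valued random
vector and `(T_{i,x})` a family of uniform-`[0,1]` random variables indexed by the coordinates
and the atoms, independent of `Z`. Define
`U_i = F_{Z_i}(Z_i−) + Σ_{x} P(Z_i = x) T_{i,x} 1_{Z_i = x}`.
Then each `U_i` is uniform on `[0,1]`, and the cdf `C` of `U` satisfies
`F_Z(z) = C(F_{Z₁}(z₁), …, F_{Z_d}(z_d))` for all `z`, i.e. it is a copula for `Z`. -/
theorem interpolating_copula_is_copula
    {Ω : Type*} [MeasurableSpace Ω] (μ : Measure Ω) [IsProbabilityMeasure μ]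
    {d : ℕ} (Z : Fin d → Ω → ℝ) (hZ : ∀ i, Measurable (Z i))
    (T : Fin d → ℝ → Ω → ℝ) (hT : ∀ i x, Measurable (T i x))
    (hTunif : ∀ i x, 0 < μ {ω | Z i ω = x} →
      μ.map (T i x) = (volume : Measure ℝ).restrict (Set.Icc 0 1))
    (hTindep : ProbabilityTheory.IndepFun
      (fun ω => fun p : Fin d × ℝ => T p.1 p.2 ω) (fun ω => fun i => Z i ω) μ)
    (U : Fin d → Ω → ℝ)
    (hU : ∀ i ω, U i ω = (μ {ω' | Z i ω' < Z i ω}).toReal +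
      ∑' x : ℝ, (μ {ω' | Z i ω' = x}).toReal * T i x ω *
        Set.indicator {x} (fun _ => (1 : ℝ)) (Z i ω)) :
    (∀ i, μ.map (U i) = (volume : Measure ℝ).restrict (Set.Icc 0 1)) ∧
    (∀ z : Fin d → ℝ,
      μ {ω | ∀ i, Z i ω ≤ z i} =
        μ {ω | ∀ i, U i ω ≤ (μ {ω' | Z i ω' ≤ z i}).toReal}) := by

  have hV : ∀ i ω, U i ω = (μ {ω' | Z i ω' < Z i ω}).toReal +
      (μ {ω' | Z i ω' = Z i ω}).toReal * T i (Z i ω) ω := by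
    intro i ω
    rw [hU i ω]
    congr 1
    have hz : ∀ x : ℝ, x ≠ Z i ω →
        (μ {ω' | Z i ω' = x}).toReal * T i x ω *
          Set.indicator {x} (fun _ => (1:ℝ)) (Z i ω) = 0 := by
      intro x hx
      rw [Set.indicator_of_notMem
        (show Z i ω ∉ ({x} : Set ℝ) by simp only [Set.mem_singleton_iff]; exact fun h => hx h.symm), mul_zero]
    rw [tsum_eq_single (Z i ω) hz,
      Set.indicator_of_mem (Set.mem_singleton _) (fun _ => (1:ℝ)), mul_one]
  have hind : ∀ i x, IndepFun (T i x) (Z i) μ := by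
    intro i x
    exact hTindep.comp (measurable_pi_apply (i, x)) (measurable_pi_apply i)
  refine ⟨fun i => InterpCopula.coord_unif (hZ i) (hT i) (hTunif i) (hind i) (hV i), fun z => ?_⟩
  refine measure_congr (MeasureTheory.ae_eq_set.2 ⟨?_, ?_⟩)
  · refine measure_mono_null (t := ⋃ i, ({ω | Z i ω ≤ z i} \
        {ω | U i ω ≤ (μ {ω' | Z i ω' ≤ z i}).toReal})) ?_ ?_
    · rintro ω ⟨h1, h2⟩
      simp only [mem_setOf_eq, not_forall] at h2
      obtain ⟨i, hi⟩ := h2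
      exact mem_iUnion.2 ⟨i, h1 i, hi⟩
    · exact measure_iUnion_null fun i =>
        (InterpCopula.coord_diff_null (hZ i) (hT i) (hTunif i) (hV i) (z i)).1
  · refine measure_mono_null (t := ⋃ i, ({ω | U i ω ≤ (μ {ω' | Z i ω' ≤ z i}).toReal} \
        {ω | Z i ω ≤ z i})) ?_ ?_
    · rintro ω ⟨h1, h2⟩
      simp only [mem_setOf_eq, not_forall] at h2
      obtain ⟨i, hi⟩ := h2
      exact mem_iUnion.2 ⟨i, h1 i, hi⟩
    · exact measure_iUnion_null fun i =>
        (InterpCopula.coord_diff_null (hZ i) (hT i) (hTunif i) (hV i) (z i)).2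
end
end
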